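/- arXiv:2406.19074 — 4 statements merged into one kernel-verified Lean document; each statement's English description precedes it below -/
import Mathlib

section
/- For every q ∈ [0,1), every m ∈ ℤ and all i₁,j₁,i₂,j₂ ∈ ℕ, the operator E(m; j₁,i₁; j₂,i₂) ∈ B(H), defined on basis vectors by E(m; j₁,i₁; j₂,i₂) e_{r,a,b} = δ_{a,i₁} δ_{b,i₂} e_{r+m, j₁, j₂}, belongs to D₃⁴(q). Consequently the natural copy of C(𝕋)⊗K(ℓ²(ℕ))⊗K(ℓ²(ℕ)) in B(H) (the closed linear span of all such operators) is contained in D₃⁴(q). -/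
noncomputable section

/-- The Hilbert space `H = ℓ²(ℤ × ℕ × ℕ)`. -/
abbrev H : Type := lp (fun _ : ℤ × ℕ × ℕ => ℂ) 2

/-- The canonical orthonormal basis vectors `e_{m,i,j}` of `H`. -/
noncomputable def e (x : ℤ × ℕ × ℕ) : H := lp.single 2 x 1

/-- The defining property of the operator `X₀(q) = t ⊗ q^N ⊗ q^N`. -/
def IsX₀ (q : ℝ) (T : H →L[ℂ] H) : Prop :=
  ∀ (m : ℤ) (i j : ℕ), T (e (m, i, j)) = ((q ^ (i + j) : ℝ) : ℂ) • e (m + 1, i, j)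

/-- The defining property of the operator `X₁(q) = t ⊗ √(1-q^{2N+2})S* ⊗ q^N`. -/
def IsX₁ (q : ℝ) (T : H →L[ℂ] H) : Prop :=
  ∀ (m : ℤ) (i j : ℕ),
    T (e (m, i, j)) = ((Real.sqrt (1 - q ^ (2 * i + 2)) * q ^ j : ℝ) : ℂ) • e (m + 1, i + 1, j)

/-- The defining property of the operator `X₂(q) = t ⊗ √(1-q^{2N+2})S* ⊗ √(1-q^{2N+2})S*`. -/
def IsX₂ (q : ℝ) (T : H →L[ℂ] H) : Prop :=
  ∀ (m : ℤ) (i j : ℕ),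
    T (e (m, i, j)) =
      ((Real.sqrt ((1 - q ^ (2 * i + 2)) * (1 - q ^ (2 * j + 2))) : ℝ) : ℂ) •
        e (m + 1, i + 1, j + 1)

/-- The defining property of the operator `Y₁(q) = t ⊗ q^N ⊗ √(1-q^{2N+2})S*`. -/
def IsY₁ (q : ℝ) (T : H →L[ℂ] H) : Prop :=
  ∀ (m : ℤ) (i j : ℕ),
    T (e (m, i, j)) = ((q ^ i * Real.sqrt (1 - q ^ (2 * j + 2)) : ℝ) : ℂ) • e (m + 1, i, j + 1)

/-- The unital C*-subalgebra `D₃⁴` of `B(H)` generated by the four operators. -/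
noncomputable def D34 (X₀ X₁ X₂ Y₁ : H →L[ℂ] H) : StarSubalgebra ℂ (H →L[ℂ] H) :=
  (StarAlgebra.adjoin ℂ {X₀, X₁, X₂, Y₁}).topologicalClosure

/-- The defining property of the matrix unit operator
`E(m; j₁,i₁; j₂,i₂) e_{r,a,b} = δ_{a,i₁} δ_{b,i₂} e_{r+m,j₁,j₂}`. -/
def IsE (m : ℤ) (j₁ i₁ j₂ i₂ : ℕ) (T : H →L[ℂ] H) : Prop :=
  ∀ (r : ℤ) (a b : ℕ),
    T (e (r, a, b)) = if a = i₁ ∧ b = i₂ then e (r + m, j₁, j₂) else 0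


/-! ### Auxiliary infrastructure -/

open scoped ENNReal

namespace Stmt2Aux

noncomputable def bH : HilbertBasis (ℤ × ℕ × ℕ) ℂ H :=
  HilbertBasis.ofRepr (LinearIsometryEquiv.refl ℂ H)

lemma bH_eq (x : ℤ × ℕ × ℕ) : bH x = e x := by
  classical
  rw [← bH.repr_symm_single]; rfl

lemma e_coord (z x : ℤ × ℕ × ℕ) : (e z : ∀ _ : ℤ × ℕ × ℕ, ℂ) x = if x = z then 1 else 0 := by
  by_cases h : x = z <;> simp [e, lp.single_apply, h]

lemma vec_ext {u v : H} (h : ∀ x, (u : ∀ _ : ℤ × ℕ × ℕ, ℂ) x = v x) : u = v :=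
  lp.ext (funext h)

lemma dense_span_e : Dense (↑(Submodule.span ℂ (Set.range e)) : Set H) := by
  rw [Submodule.dense_iff_topologicalClosure_eq_top]
  have := bH.dense_span
  simpa [funext bH_eq] using this

lemma clm_ext {T S : H →L[ℂ] H} (h : ∀ x, T (e x) = S (e x)) : T = S := by
  refine ContinuousLinearMap.ext_on dense_span_e ?_
  rintro _ ⟨x, rfl⟩
  exact h x

lemma adjoint_coord (T : H →L[ℂ] H) (y x : ℤ × ℕ × ℕ) :
    ((ContinuousLinearMap.adjoint T) (e y) : ∀ _ : ℤ × ℕ × ℕ, ℂ) x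
      = starRingEnd ℂ ((T (e x) : ∀ _ : ℤ × ℕ × ℕ, ℂ) y) := by
  have h1 : (inner ℂ (e x) ((ContinuousLinearMap.adjoint T) (e y)) : ℂ)
      = ((ContinuousLinearMap.adjoint T) (e y) : ∀ _ : ℤ × ℕ × ℕ, ℂ) x := by
    simp [e, lp.inner_single_left]
  rw [← h1, ContinuousLinearMap.adjoint_inner_right]
  simp [e, lp.inner_single_right]

noncomputable def evalCLM (x : ℤ × ℕ × ℕ) : H →L[ℂ] ℂ :=
  LinearMap.mkContinuous
    { toFun := fun f => (f : ∀ _ : ℤ × ℕ × ℕ, ℂ) x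
      map_add' := fun f g => by simp
      map_smul' := fun c f => by simp }
    1 (fun f => by rw [one_mul]; exact lp.norm_apply_le_norm two_ne_zero f x)

@[simp] lemma evalCLM_apply (x : ℤ × ℕ × ℕ) (f : H) :
    evalCLM x f = (f : ∀ _ : ℤ × ℕ × ℕ, ℂ) x := rfl

lemma apply_coord {T : H →L[ℂ] H} {d : ℤ × ℕ × ℕ → ℂ}
    (hT : ∀ x, T (e x) = d x • e x) (f : H) (x : ℤ × ℕ × ℕ) :
    (T f : ∀ _ : ℤ × ℕ × ℕ, ℂ) x = d x * f x := by
  have : (evalCLM x).comp T = d x • evalCLM x := by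
    refine ContinuousLinearMap.ext_on dense_span_e ?_
    rintro _ ⟨y, rfl⟩
    simp only [ContinuousLinearMap.comp_apply, hT y, ContinuousLinearMap.smul_apply,
      evalCLM_apply, lp.coeFn_smul, Pi.smul_apply, smul_eq_mul]
    rcases eq_or_ne x y with rfl | h
    · simp
    · simp [e_coord, h]
  have h2 := congrArg (fun S => S f) this
  simpa using h2

lemma diag_norm_le {T : H →L[ℂ] H} {d : ℤ × ℕ × ℕ → ℂ}
    (hT : ∀ x, T (e x) = d x • e x) {C : ℝ} (hC : 0 ≤ C) (hd : ∀ x, ‖d x‖ ≤ C) :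
    ‖T‖ ≤ C := by
  refine ContinuousLinearMap.opNorm_le_bound T hC (fun f => ?_)
  have hp : (0:ℝ) < (2 : ℝ≥0∞).toReal := by norm_num
  have key : ‖T f‖ ^ (2 : ℝ≥0∞).toReal ≤ (C * ‖f‖) ^ (2 : ℝ≥0∞).toReal := by
    rw [lp.norm_rpow_eq_tsum hp]
    have hsum : Summable fun x => ‖(T f : ∀ _ : ℤ × ℕ × ℕ, ℂ) x‖ ^ (2 : ℝ≥0∞).toReal :=
      (lp.memℓp (T f)).summable hp
    have hsum2 : Summable fun x =>
        C ^ (2 : ℝ≥0∞).toReal * ‖(f : ∀ _ : ℤ × ℕ × ℕ, ℂ) x‖ ^ (2 : ℝ≥0∞).toReal :=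
      (((lp.memℓp f).summable hp).mul_left _)
    have hle : ∀ x, ‖(T f : ∀ _ : ℤ × ℕ × ℕ, ℂ) x‖ ^ (2 : ℝ≥0∞).toReal
        ≤ C ^ (2 : ℝ≥0∞).toReal * ‖(f : ∀ _ : ℤ × ℕ × ℕ, ℂ) x‖ ^ (2 : ℝ≥0∞).toReal := by
      intro x
      rw [apply_coord hT f x]
      have h1 : ‖d x * (f : ∀ _ : ℤ × ℕ × ℕ, ℂ) x‖ ≤ C * ‖(f : ∀ _ : ℤ × ℕ × ℕ, ℂ) x‖ := by
        rw [norm_mul]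
        exact mul_le_mul_of_nonneg_right (hd x) (norm_nonneg _)
      calc ‖d x * (f : ∀ _ : ℤ × ℕ × ℕ, ℂ) x‖ ^ (2 : ℝ≥0∞).toReal
          ≤ (C * ‖(f : ∀ _ : ℤ × ℕ × ℕ, ℂ) x‖) ^ (2 : ℝ≥0∞).toReal := by
            apply Real.rpow_le_rpow (norm_nonneg _) h1 (by norm_num)
        _ = C ^ (2 : ℝ≥0∞).toReal * ‖(f : ∀ _ : ℤ × ℕ × ℕ, ℂ) x‖ ^ (2 : ℝ≥0∞).toReal := by
            rw [Real.mul_rpow hC (norm_nonneg _)]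
    calc (∑' x, ‖(T f : ∀ _ : ℤ × ℕ × ℕ, ℂ) x‖ ^ (2 : ℝ≥0∞).toReal)
        ≤ ∑' x, C ^ (2 : ℝ≥0∞).toReal * ‖(f : ∀ _ : ℤ × ℕ × ℕ, ℂ) x‖ ^ (2 : ℝ≥0∞).toReal :=
          Summable.tsum_le_tsum hle hsum hsum2
      _ = C ^ (2 : ℝ≥0∞).toReal * ‖f‖ ^ (2 : ℝ≥0∞).toReal := by
          rw [tsum_mul_left, ← lp.norm_rpow_eq_tsum hp]
      _ = (C * ‖f‖) ^ (2 : ℝ≥0∞).toReal := by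
          rw [Real.mul_rpow hC (norm_nonneg _)]
  have h2 : (2 : ℝ≥0∞).toReal = ((2:ℕ):ℝ) := by norm_num
  rw [h2, Real.rpow_natCast, Real.rpow_natCast] at key
  exact le_of_pow_le_pow_left₀ two_ne_zero (mul_nonneg hC (norm_nonneg f)) key

/-! ### Algebraic lemmas about `IsE` -/

lemma IsE.unique {m : ℤ} {j₁ i₁ j₂ i₂ : ℕ} {T S : H →L[ℂ] H}
    (hT : IsE m j₁ i₁ j₂ i₂ T) (hS : IsE m j₁ i₁ j₂ i₂ S) : T = S := by
  refine clm_ext fun x => ?_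
  obtain ⟨r, a, b⟩ := x
  rw [hT r a b, hS r a b]

lemma IsE.comp {m₁ m₂ : ℤ} {j₁ k₁ j₂ k₂ i₁ i₂ : ℕ} {S T : H →L[ℂ] H}
    (hS : IsE m₁ j₁ k₁ j₂ k₂ S) (hT : IsE m₂ k₁ i₁ k₂ i₂ T) :
    IsE (m₁ + m₂) j₁ i₁ j₂ i₂ (S * T) := by
  intro r a b
  rw [ContinuousLinearMap.mul_apply, hT r a b]
  by_cases hc : a = i₁ ∧ b = i₂
  · rw [if_pos hc, if_pos hc, hS (r + m₂) k₁ k₂, if_pos ⟨rfl, rfl⟩]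
    congr 2
    ring
  · rw [if_neg hc, if_neg hc, map_zero]

lemma IsE.adj {m : ℤ} {j₁ i₁ j₂ i₂ : ℕ} {T : H →L[ℂ] H}
    (h : IsE m j₁ i₁ j₂ i₂ T) : IsE (-m) i₁ j₁ i₂ j₂ (star T) := by
  intro r a b
  rw [ContinuousLinearMap.star_eq_adjoint]
  refine vec_ext fun x => ?_
  obtain ⟨s, u, v⟩ := x
  rw [adjoint_coord, h s u v,
    apply_ite (fun w : H => (w : ∀ _ : ℤ × ℕ × ℕ, ℂ) (r, a, b)),
    apply_ite (fun w : H => (w : ∀ _ : ℤ × ℕ × ℕ, ℂ) (s, u, v))]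
  simp only [e_coord, lp.coeFn_zero, Pi.zero_apply, Prod.mk.injEq, apply_ite (starRingEnd ℂ),
    map_one, map_zero]
  split_ifs <;> first | rfl | omega

/-! ### Membership lemmas -/

variable {q : ℝ} {X₀ X₁ X₂ Y₁ : H →L[ℂ] H}

lemma memX₀ : X₀ ∈ D34 X₀ X₁ X₂ Y₁ :=
  (StarAlgebra.adjoin ℂ {X₀, X₁, X₂, Y₁}).le_topologicalClosure
    (StarAlgebra.subset_adjoin ℂ _ (by simp))

lemma memX₁ : X₁ ∈ D34 X₀ X₁ X₂ Y₁ :=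
  (StarAlgebra.adjoin ℂ {X₀, X₁, X₂, Y₁}).le_topologicalClosure
    (StarAlgebra.subset_adjoin ℂ _ (by simp))

lemma memX₂ : X₂ ∈ D34 X₀ X₁ X₂ Y₁ :=
  (StarAlgebra.adjoin ℂ {X₀, X₁, X₂, Y₁}).le_topologicalClosure
    (StarAlgebra.subset_adjoin ℂ _ (by simp))

lemma memY₁ : Y₁ ∈ D34 X₀ X₁ X₂ Y₁ :=
  (StarAlgebra.adjoin ℂ {X₀, X₁, X₂, Y₁}).le_topologicalClosure
    (StarAlgebra.subset_adjoin ℂ _ (by simp))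

lemma isClosed_D34 : IsClosed ((D34 X₀ X₁ X₂ Y₁ : Set (H →L[ℂ] H))) :=
  StarSubalgebra.isClosed_topologicalClosure _

lemma adjX₀ (h0 : IsX₀ q X₀) (m : ℤ) (i j : ℕ) :
    (star X₀) (e (m, i, j)) = ((q ^ (i + j) : ℝ) : ℂ) • e (m - 1, i, j) := by
  rw [ContinuousLinearMap.star_eq_adjoint]
  refine vec_ext fun x => ?_
  obtain ⟨s, u, v⟩ := x
  rw [adjoint_coord, h0 s u v]
  simp only [lp.coeFn_smul, Pi.smul_apply, smul_eq_mul, e_coord, Prod.mk.injEq, map_mul,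
    Complex.conj_ofReal, apply_ite (starRingEnd ℂ), map_one, map_zero, mul_ite, mul_one, mul_zero]
  split_ifs with hA hB hB
  · obtain ⟨-, rfl, rfl⟩ := hA
    rfl
  · exfalso; omega
  · exfalso; omega
  · rfl

/-! ### The diagonal projection is in `D34` -/

lemma mem_of_isE00000 (hq : q ∈ Set.Ico (0:ℝ) 1) (h0 : IsX₀ q X₀)
    {P : H →L[ℂ] H} (hP : IsE 0 0 0 0 0 P) : P ∈ D34 X₀ X₁ X₂ Y₁ := by
  have hDdiag : ∀ x : ℤ × ℕ × ℕ, (star X₀ * X₀) (e x)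
      = (((q ^ (x.2.1 + x.2.2) * q ^ (x.2.1 + x.2.2) : ℝ) : ℂ)) • e x := by
    rintro ⟨m, i, j⟩
    rw [ContinuousLinearMap.mul_apply, h0 m i j, map_smul, adjX₀ h0 (m+1) i j, smul_smul,
      add_sub_cancel_right]
    push_cast
    ring_nf
  have hPdiag : ∀ x : ℤ × ℕ × ℕ, P (e x)
      = (((if x.2.1 = 0 ∧ x.2.2 = 0 then (1:ℝ) else 0) : ℂ)) • e x := by
    rintro ⟨m, i, j⟩
    rw [hP m i j]
    by_cases h : i = 0 ∧ j = 0
    · obtain ⟨rfl, rfl⟩ := h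
      rw [if_pos ⟨rfl, rfl⟩, if_pos ⟨rfl, rfl⟩, add_zero]
      simp
    · rw [if_neg h, if_neg h]
      simp
  have hpow : ∀ (n : ℕ) (x : ℤ × ℕ × ℕ), ((star X₀ * X₀) ^ n) (e x)
      = (((q ^ (x.2.1 + x.2.2) * q ^ (x.2.1 + x.2.2) : ℝ) ^ n : ℝ) : ℂ) • e x := by
    intro n
    induction n with
    | zero => intro x; simp
    | succ n ih =>
      intro x
      rw [pow_succ, ContinuousLinearMap.mul_apply, hDdiag x, map_smul, ih x, smul_smul]
      push_cast
      ring_nf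
  have hbound : ∀ n : ℕ, ‖(star X₀ * X₀) ^ (n+1) - P‖ ≤ q ^ (n+1) := by
    intro n
    refine diag_norm_le (d := fun x =>
        ((((q ^ (x.2.1 + x.2.2) * q ^ (x.2.1 + x.2.2)) ^ (n+1) : ℝ) : ℂ)
          - if x.2.1 = 0 ∧ x.2.2 = 0 then (1:ℂ) else 0)) ?_
      (pow_nonneg hq.1 _) ?_
    · intro x
      rw [ContinuousLinearMap.sub_apply, hpow (n+1) x, hPdiag x, ← sub_smul]
      congr 1
    · rintro ⟨m, i, j⟩
      by_cases h : i = 0 ∧ j = 0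
      · obtain ⟨rfl, rfl⟩ := h
        simp [pow_nonneg hq.1]
      · beta_reduce
        rw [if_neg h, sub_zero, Complex.norm_real, Real.norm_eq_abs, ← pow_add, ← pow_mul,
          abs_of_nonneg (pow_nonneg hq.1 _)]
        refine pow_le_pow_of_le_one hq.1 hq.2.le ?_
        have : 1 ≤ i + j := by omega
        nlinarith
  have htend : Filter.Tendsto (fun n : ℕ => (star X₀ * X₀) ^ (n+1)) Filter.atTop (nhds P) := by
    rw [tendsto_iff_norm_sub_tendsto_zero]
    refine squeeze_zero (fun n => norm_nonneg _) hbound ?_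
    have h1 : Filter.Tendsto (fun n : ℕ => q ^ n) Filter.atTop (nhds 0) :=
      tendsto_pow_atTop_nhds_zero_of_lt_one hq.1 hq.2
    exact h1.comp (Filter.tendsto_add_atTop_nat 1)
  exact isClosed_D34.mem_of_tendsto htend
    (Filter.Eventually.of_forall fun n => pow_mem (mul_mem (star_mem memX₀) memX₀) _)

/-! ### Building representatives of the matrix units -/

lemma rep_int (hq : q ∈ Set.Ico (0:ℝ) 1) (h0 : IsX₀ q X₀)
    {P : H →L[ℂ] H} (hP : IsE 0 0 0 0 0 P) (hPm : P ∈ D34 X₀ X₁ X₂ Y₁) :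
    ∀ m : ℤ, ∃ T ∈ D34 X₀ X₁ X₂ Y₁, IsE m 0 0 0 0 T := by
  have hneg : IsE (-1) 0 0 0 0 (P * star X₀) := by
    intro r a b
    rw [ContinuousLinearMap.mul_apply, adjX₀ h0 r a b, map_smul, hP (r-1) a b]
    by_cases h : a = 0 ∧ b = 0
    · obtain ⟨rfl, rfl⟩ := h
      rw [if_pos ⟨rfl, rfl⟩, if_pos ⟨rfl, rfl⟩]
      simp only [Nat.add_zero, pow_zero, Complex.ofReal_one, one_smul]
      congr 2
      ring
    · rw [if_neg h, if_neg h, smul_zero]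
  have hpos : IsE 1 0 0 0 0 (X₀ * P) := by
    intro r a b
    rw [ContinuousLinearMap.mul_apply, hP r a b]
    by_cases h : a = 0 ∧ b = 0
    · obtain ⟨rfl, rfl⟩ := h
      rw [if_pos ⟨rfl, rfl⟩, if_pos ⟨rfl, rfl⟩, add_zero, h0 r 0 0]
      simp
    · rw [if_neg h, if_neg h, map_zero]
  intro m
  induction m using Int.induction_on with
  | zero => exact ⟨P, hPm, hP⟩
  | succ k ih =>
    obtain ⟨T, hTm, hT⟩ := ih
    refine ⟨X₀ * P * T, mul_mem (mul_mem memX₀ hPm) hTm, ?_⟩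
    have := IsE.comp hpos hT
    rwa [show (1 + (k:ℤ)) = (k:ℤ) + 1 by ring] at this
  | pred k ih =>
    obtain ⟨T, hTm, hT⟩ := ih
    refine ⟨P * star X₀ * T, mul_mem (mul_mem hPm (star_mem memX₀)) hTm, ?_⟩
    have := IsE.comp hneg hT
    rwa [show (-1 + -(k:ℤ)) = -(k:ℤ) - 1 by ring] at this

lemma rep_pairs (hq : q ∈ Set.Ico (0:ℝ) 1) (h0 : IsX₀ q X₀) (h1 : IsX₁ q X₁)
    (h2 : IsX₂ q X₂) (hY : IsY₁ q Y₁)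
    {P : H →L[ℂ] H} (hP : IsE 0 0 0 0 0 P) (hPm : P ∈ D34 X₀ X₁ X₂ Y₁) :
    ∀ j₁ j₂ : ℕ, ∃ T ∈ D34 X₀ X₁ X₂ Y₁, IsE 0 j₁ 0 j₂ 0 T := by
  obtain ⟨Tn, hTnm, hTn⟩ := rep_int hq h0 hP hPm (-1)
  -- step with X₁
  have stepX₁ : ∀ j : ℕ, ∀ T ∈ D34 X₀ X₁ X₂ Y₁, IsE 0 j 0 0 0 T →
      ∃ S ∈ D34 X₀ X₁ X₂ Y₁, IsE 0 (j+1) 0 0 0 S := by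
    intro j T hTm hT
    have hcpos : (0:ℝ) < Real.sqrt (1 - q ^ (2*j+2)) := by
      have := pow_lt_one₀ hq.1 hq.2 (n := 2*j+2) (by omega)
      exact Real.sqrt_pos.2 (by linarith)
    refine ⟨((Real.sqrt (1 - q ^ (2*j+2)) : ℂ))⁻¹ • (X₁ * (T * Tn)),
      SMulMemClass.smul_mem _ (mul_mem memX₁ (mul_mem hTm hTnm)), ?_⟩
    intro r a b
    rw [ContinuousLinearMap.smul_apply, ContinuousLinearMap.mul_apply,
      ContinuousLinearMap.mul_apply, hTn r a b]
    by_cases h : a = 0 ∧ b = 0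
    · rw [if_pos h, if_pos h, hT (r + -1) 0 0, if_pos ⟨rfl, rfl⟩, h1 (r + -1 + 0) j 0]
      rw [smul_smul]
      have : ((Real.sqrt (1 - q ^ (2*j+2)) : ℂ))⁻¹
          * ((Real.sqrt (1 - q ^ (2*j+2)) * q ^ (0:ℕ) : ℝ) : ℂ) = 1 := by
        push_cast
        rw [pow_zero, mul_one]
        exact inv_mul_cancel₀ (by exact_mod_cast hcpos.ne')
      rw [this, one_smul]
      congr 2
      ring
    · rw [if_neg h, if_neg h, map_zero, map_zero, smul_zero]
  -- step with Y₁
  have stepY₁ : ∀ j : ℕ, ∀ T ∈ D34 X₀ X₁ X₂ Y₁, IsE 0 0 0 j 0 T →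
      ∃ S ∈ D34 X₀ X₁ X₂ Y₁, IsE 0 0 0 (j+1) 0 S := by
    intro j T hTm hT
    have hcpos : (0:ℝ) < Real.sqrt (1 - q ^ (2*j+2)) := by
      have := pow_lt_one₀ hq.1 hq.2 (n := 2*j+2) (by omega)
      exact Real.sqrt_pos.2 (by linarith)
    refine ⟨((Real.sqrt (1 - q ^ (2*j+2)) : ℂ))⁻¹ • (Y₁ * (T * Tn)),
      SMulMemClass.smul_mem _ (mul_mem memY₁ (mul_mem hTm hTnm)), ?_⟩
    intro r a b
    rw [ContinuousLinearMap.smul_apply, ContinuousLinearMap.mul_apply,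
      ContinuousLinearMap.mul_apply, hTn r a b]
    by_cases h : a = 0 ∧ b = 0
    · rw [if_pos h, if_pos h, hT (r + -1) 0 0, if_pos ⟨rfl, rfl⟩, hY (r + -1 + 0) 0 j]
      rw [smul_smul]
      have : ((Real.sqrt (1 - q ^ (2*j+2)) : ℂ))⁻¹
          * ((q ^ (0:ℕ) * Real.sqrt (1 - q ^ (2*j+2)) : ℝ) : ℂ) = 1 := by
        push_cast
        rw [pow_zero, one_mul]
        exact inv_mul_cancel₀ (by exact_mod_cast hcpos.ne')
      rw [this, one_smul]
      congr 2
      ring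
    · rw [if_neg h, if_neg h, map_zero, map_zero, smul_zero]
  -- step with X₂
  have stepX₂ : ∀ a₀ b₀ : ℕ, ∀ T ∈ D34 X₀ X₁ X₂ Y₁, IsE 0 a₀ 0 b₀ 0 T →
      ∃ S ∈ D34 X₀ X₁ X₂ Y₁, IsE 0 (a₀+1) 0 (b₀+1) 0 S := by
    intro a₀ b₀ T hTm hT
    have hc1 : (0:ℝ) < 1 - q ^ (2*a₀+2) := by
      have := pow_lt_one₀ hq.1 hq.2 (n := 2*a₀+2) (by omega)
      linarith
    have hc2 : (0:ℝ) < 1 - q ^ (2*b₀+2) := by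
      have := pow_lt_one₀ hq.1 hq.2 (n := 2*b₀+2) (by omega)
      linarith
    have hcpos : (0:ℝ) < Real.sqrt ((1 - q ^ (2*a₀+2)) * (1 - q ^ (2*b₀+2))) :=
      Real.sqrt_pos.2 (mul_pos hc1 hc2)
    refine ⟨((Real.sqrt ((1 - q ^ (2*a₀+2)) * (1 - q ^ (2*b₀+2))) : ℂ))⁻¹ • (X₂ * (T * Tn)),
      SMulMemClass.smul_mem _ (mul_mem memX₂ (mul_mem hTm hTnm)), ?_⟩
    intro r a b
    rw [ContinuousLinearMap.smul_apply, ContinuousLinearMap.mul_apply,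
      ContinuousLinearMap.mul_apply, hTn r a b]
    by_cases h : a = 0 ∧ b = 0
    · rw [if_pos h, if_pos h, hT (r + -1) 0 0, if_pos ⟨rfl, rfl⟩, h2 (r + -1 + 0) a₀ b₀]
      rw [smul_smul]
      have : ((Real.sqrt ((1 - q ^ (2*a₀+2)) * (1 - q ^ (2*b₀+2))) : ℂ))⁻¹
          * ((Real.sqrt ((1 - q ^ (2*a₀+2)) * (1 - q ^ (2*b₀+2))) : ℝ) : ℂ) = 1 :=
        inv_mul_cancel₀ (by exact_mod_cast hcpos.ne')
      rw [this, one_smul]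
      congr 2
      ring
    · rw [if_neg h, if_neg h, map_zero, map_zero, smul_zero]
  have hrow : ∀ j : ℕ, ∃ T ∈ D34 X₀ X₁ X₂ Y₁, IsE 0 j 0 0 0 T := by
    intro j
    induction j with
    | zero => exact ⟨P, hPm, hP⟩
    | succ j ih =>
      obtain ⟨T, hTm, hT⟩ := ih
      exact stepX₁ j T hTm hT
  have hcol : ∀ j : ℕ, ∃ T ∈ D34 X₀ X₁ X₂ Y₁, IsE 0 0 0 j 0 T := by
    intro j
    induction j with
    | zero => exact ⟨P, hPm, hP⟩
    | succ j ih =>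
      obtain ⟨T, hTm, hT⟩ := ih
      exact stepY₁ j T hTm hT
  have hdiag : ∀ (k a₀ b₀ : ℕ), (∃ T ∈ D34 X₀ X₁ X₂ Y₁, IsE 0 a₀ 0 b₀ 0 T) →
      ∃ T ∈ D34 X₀ X₁ X₂ Y₁, IsE 0 (a₀+k) 0 (b₀+k) 0 T := by
    intro k
    induction k with
    | zero => intro a₀ b₀ h; exact h
    | succ k ih =>
      intro a₀ b₀ h
      obtain ⟨T, hTm, hT⟩ := ih a₀ b₀ h
      obtain ⟨S, hSm, hS⟩ := stepX₂ (a₀+k) (b₀+k) T hTm hT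
      exact ⟨S, hSm, hS⟩
  intro j₁ j₂
  rcases le_total j₂ j₁ with h | h
  · have := hdiag j₂ (j₁ - j₂) 0 (hrow (j₁ - j₂))
    rwa [Nat.sub_add_cancel h, Nat.zero_add] at this
  · have := hdiag j₁ 0 (j₂ - j₁) (hcol (j₂ - j₁))
    rwa [Nat.sub_add_cancel h, Nat.zero_add] at this

lemma rep_all (hq : q ∈ Set.Ico (0:ℝ) 1) (h0 : IsX₀ q X₀) (h1 : IsX₁ q X₁)
    (h2 : IsX₂ q X₂) (hY : IsY₁ q Y₁)
    {P : H →L[ℂ] H} (hP : IsE 0 0 0 0 0 P) (hPm : P ∈ D34 X₀ X₁ X₂ Y₁)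
    (m : ℤ) (j₁ i₁ j₂ i₂ : ℕ) :
    ∃ T ∈ D34 X₀ X₁ X₂ Y₁, IsE m j₁ i₁ j₂ i₂ T := by
  obtain ⟨T₁, hT₁m, hT₁⟩ := rep_pairs hq h0 h1 h2 hY hP hPm j₁ j₂
  obtain ⟨T₂, hT₂m, hT₂⟩ := rep_int hq h0 hP hPm m
  obtain ⟨T₃, hT₃m, hT₃⟩ := rep_pairs hq h0 h1 h2 hY hP hPm i₁ i₂
  have hT₃' : IsE 0 0 i₁ 0 i₂ (star T₃) := by
    have := IsE.adj hT₃
    simpa using this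
  refine ⟨T₁ * T₂ * (star T₃), mul_mem (mul_mem hT₁m hT₂m) (star_mem hT₃m), ?_⟩
  have := IsE.comp (IsE.comp hT₁ hT₂) hT₃'
  simpa using this

end Stmt2Aux

/-- For every `q ∈ [0,1)`, each matrix-unit operator `E(m; j₁,i₁; j₂,i₂)` belongs to `D₃⁴(q)`;
consequently the natural copy of `C(𝕋) ⊗ K ⊗ K`, i.e. the closed linear span of all such
operators, is contained in `D₃⁴(q)`. -/
theorem stmt_2 (q : ℝ) (hq : q ∈ Set.Ico (0 : ℝ) 1)
    (X₀ X₁ X₂ Y₁ : H →L[ℂ] H)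
    (h0 : IsX₀ q X₀) (h1 : IsX₁ q X₁) (h2 : IsX₂ q X₂) (hY : IsY₁ q Y₁)
    (E : ℤ → ℕ → ℕ → ℕ → ℕ → (H →L[ℂ] H))
    (hE : ∀ m j₁ i₁ j₂ i₂, IsE m j₁ i₁ j₂ i₂ (E m j₁ i₁ j₂ i₂)) :
    (∀ m j₁ i₁ j₂ i₂, E m j₁ i₁ j₂ i₂ ∈ D34 X₀ X₁ X₂ Y₁) ∧
      closure (↑(Submodule.span ℂ
          {T : H →L[ℂ] H | ∃ m j₁ i₁ j₂ i₂, T = E m j₁ i₁ j₂ i₂}) : Set (H →L[ℂ] H)) ⊆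
        (D34 X₀ X₁ X₂ Y₁ : Set (H →L[ℂ] H)) := by
  have hPm : E 0 0 0 0 0 ∈ D34 X₀ X₁ X₂ Y₁ :=
    Stmt2Aux.mem_of_isE00000 hq h0 (hE 0 0 0 0 0)
  have part1 : ∀ m j₁ i₁ j₂ i₂, E m j₁ i₁ j₂ i₂ ∈ D34 X₀ X₁ X₂ Y₁ := by
    intro m j₁ i₁ j₂ i₂
    obtain ⟨T, hTm, hT⟩ :=
      Stmt2Aux.rep_all hq h0 h1 h2 hY (hE 0 0 0 0 0) hPm m j₁ i₁ j₂ i₂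
    rwa [Stmt2Aux.IsE.unique (hE m j₁ i₁ j₂ i₂) hT]
  refine ⟨part1, ?_⟩
  refine closure_minimal ?_ Stmt2Aux.isClosed_D34
  have hle : Submodule.span ℂ {T : H →L[ℂ] H | ∃ m j₁ i₁ j₂ i₂, T = E m j₁ i₁ j₂ i₂}
      ≤ Subalgebra.toSubmodule (D34 X₀ X₁ X₂ Y₁).toSubalgebra := by
    rw [Submodule.span_le]
    rintro T ⟨m, j₁, i₁, j₂, i₂, rfl⟩
    exact part1 m j₁ i₁ j₂ i₂
  intro T hT
  exact hle hT
end
end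

section
/- For every q ∈ (0,1), the operators A, B ∈ B(H) defined on basis vectors by A e_{r,a,b} = δ_{b,0} e_{r+1, a+1, 0} (in tensor notation t⊗S*⊗p) and B e_{r,a,b} = δ_{a,0} e_{r+1, 0, b+1} (in tensor notation t⊗p⊗S*) both belong to D₃⁴(q). -/
noncomputable section

/-! ### Auxiliary infrastructure -/

abbrev I' : Type := ℤ × ℕ × ℕ

open scoped InnerProductSpace ENNReal NNReal

lemma e_coord (k l : I') : (e k) l = if l = k then (1:ℂ) else 0 := by
  rcases eq_or_ne l k with rfl | h
  · rw [e, if_pos rfl, lp.single_apply_self]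
  · rw [e, if_neg h, lp.single_apply_ne _ _ _ h]

lemma inner_e (l : I') (x : H) : ⟪e l, x⟫_ℂ = x l := by
  rw [e, lp.inner_single_left]
  simp [RCLike.inner_apply]

lemma coord_eq_inner (x : H) (l : I') : x l = ⟪e l, x⟫_ℂ := (inner_e l x).symm

lemma H_ext {x y : H} (h : ∀ l, x l = y l) : x = y := lp.ext (funext h)

lemma star_shift {T : H →L[ℂ] H} {σ : I' → I'} (hσ : Function.Injective σ)
    {c : I' → ℝ} (hT : ∀ k, T (e k) = ((c k : ℝ):ℂ) • e (σ k)) (k : I') :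
    (star T) (e (σ k)) = ((c k : ℝ):ℂ) • e k := by
  apply H_ext; intro l
  rw [coord_eq_inner, ContinuousLinearMap.star_eq_adjoint,
    ContinuousLinearMap.adjoint_inner_right, hT l, inner_smul_left]
  rw [lp.coeFn_smul, Pi.smul_apply, e_coord, inner_e, e_coord]
  by_cases h : l = k
  · subst h; rw [if_pos rfl, if_pos rfl]; simp
  · rw [if_neg (fun hh => h (hσ hh)), if_neg h]; simp

lemma star_mul_self_apply {T : H →L[ℂ] H} {σ : I' → I'} (hσ : Function.Injective σ)
    {c : I' → ℝ} (hT : ∀ k, T (e k) = ((c k : ℝ):ℂ) • e (σ k)) (k : I') :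
    (star T * T) (e k) = ((c k ^ 2 : ℝ):ℂ) • e k := by
  rw [ContinuousLinearMap.mul_apply, hT, map_smul, star_shift hσ hT, smul_smul]
  congr 1
  push_cast
  ring

lemma diag_coord {D : H →L[ℂ] H} {d : I' → ℝ}
    (hD : ∀ k, D (e k) = ((d k : ℝ):ℂ) • e k) (hsa : star D = D) (x : H) (l : I') :
    (D x) l = ((d l : ℝ):ℂ) * x l := by
  rw [coord_eq_inner, ← hsa, ContinuousLinearMap.star_eq_adjoint,
    ContinuousLinearMap.adjoint_inner_right, hD, inner_smul_left, coord_eq_inner x l]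
  simp

lemma norm_sq_eq_tsum (x : H) : ‖x‖ ^ 2 = ∑' l, ‖x l‖ ^ 2 := by
  have h := lp.norm_rpow_eq_tsum (show (0:ℝ) < (2:ℝ≥0∞).toReal by norm_num) x
  have h2 : (2 : ℝ≥0∞).toReal = (2:ℝ) := by norm_num
  rw [h2] at h
  calc ‖x‖ ^ 2 = ‖x‖ ^ (2:ℝ) := by rw [← Real.rpow_natCast]; norm_num
  _ = ∑' l, ‖x l‖ ^ (2:ℝ) := h
  _ = ∑' l, ‖x l‖ ^ 2 := by
      congr 1; funext l; rw [← Real.rpow_natCast]; norm_num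

lemma summable_coord_sq (x : H) : Summable (fun l => ‖x l‖ ^ 2) := by
  have := (lp.memℓp x).summable (show (0:ℝ) < (2:ℝ≥0∞).toReal by norm_num)
  have h2 : (2 : ℝ≥0∞).toReal = (2:ℝ) := by norm_num
  rw [h2] at this
  convert this using 2 with l
  rw [← Real.rpow_natCast]; norm_num

lemma diag_norm_le {D : H →L[ℂ] H} {d : I' → ℝ} {C : ℝ} (hC : 0 ≤ C)
    (hd : ∀ k, |d k| ≤ C)
    (hD : ∀ k, D (e k) = ((d k : ℝ):ℂ) • e k) (hsa : star D = D) (x : H) :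
    ‖D x‖ ≤ C * ‖x‖ := by
  have h1 : 0 ≤ C * ‖x‖ := by positivity
  have key : ‖D x‖ ^ 2 ≤ (C * ‖x‖) ^ 2 := by
    rw [norm_sq_eq_tsum (D x), mul_pow, norm_sq_eq_tsum x, ← tsum_mul_left]
    apply Summable.tsum_le_tsum _ (summable_coord_sq (D x)) ((summable_coord_sq x).mul_left _)
    intro l
    rw [diag_coord hD hsa x l, norm_mul, mul_pow]
    apply mul_le_mul_of_nonneg_right _ (by positivity)
    have h3 : ‖((d l : ℝ):ℂ)‖ = |d l| := by simp
    rw [h3]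
    exact pow_le_pow_left₀ (abs_nonneg _) (hd l) 2
  nlinarith [norm_nonneg (D x)]

lemma shift_norm_le {T : H →L[ℂ] H} {σ : I' → I'} (hσ : Function.Injective σ)
    {c : I' → ℝ} {C : ℝ} (hC : 0 ≤ C) (hc : ∀ k, |c k| ≤ C)
    (hT : ∀ k, T (e k) = ((c k : ℝ):ℂ) • e (σ k)) : ‖T‖ ≤ C := by
  refine T.opNorm_le_bound hC (fun x => ?_)
  have hD : ∀ k, (star T * T) (e k) = ((c k ^ 2 : ℝ):ℂ) • e k :=
    star_mul_self_apply hσ hT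
  have hsa : star (star T * T) = star T * T := by
    rw [star_mul, star_star]
  have hDx : ‖(star T * T) x‖ ≤ C ^ 2 * ‖x‖ := by
    refine diag_norm_le (by positivity) (fun k => ?_) hD hsa x
    rw [abs_of_nonneg (sq_nonneg _)]
    calc c k ^ 2 = |c k| ^ 2 := (sq_abs _).symm
    _ ≤ C ^ 2 := pow_le_pow_left₀ (abs_nonneg _) (hc k) 2
  have key : ‖T x‖ ^ 2 ≤ (C * ‖x‖) ^ 2 := by
    have h1 : (⟪T x, T x⟫_ℂ) = ⟪x, (star T * T) x⟫_ℂ := by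
      rw [ContinuousLinearMap.mul_apply, ContinuousLinearMap.star_eq_adjoint,
        ContinuousLinearMap.adjoint_inner_right]
    have h2 : ‖T x‖ ^ 2 = RCLike.re (⟪T x, T x⟫_ℂ) := by
      rw [inner_self_eq_norm_sq (𝕜 := ℂ)]
    rw [h2, h1]
    calc RCLike.re (⟪x, (star T * T) x⟫_ℂ) ≤ ‖(⟪x, (star T * T) x⟫_ℂ)‖ :=
        RCLike.re_le_norm _
    _ ≤ ‖x‖ * ‖(star T * T) x‖ := norm_inner_le_norm _ _
    _ ≤ ‖x‖ * (C ^ 2 * ‖x‖) := mul_le_mul_of_nonneg_left hDx (norm_nonneg _)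
    _ = (C * ‖x‖) ^ 2 := by ring
  nlinarith [norm_nonneg (T x), mul_nonneg hC (norm_nonneg x)]

def gam : ℕ → ℝ → ℝ
  | 0, _ => 1
  | n+1, x => gam n x * (3 - x * gam n x ^ 2) / 2

lemma gam_bounds {q x : ℝ} (hq0 : 0 < q) (hq1 : q < 1)
    (hx1 : x ≤ 1) (hx2 : 1 - x ≤ q ^ 2) (n : ℕ) :
    0 ≤ gam n x ∧ 0 ≤ 1 - x * gam n x ^ 2 ∧ 1 - x * gam n x ^ 2 ≤ q ^ (2*n+2) := by
  induction n with
  | zero => simp only [gam, one_pow, mul_one]; exact ⟨zero_le_one, by linarith, by norm_num; linarith⟩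
  | succ n ih =>
    obtain ⟨hg, he0, he1⟩ := ih
    set g := gam n x with hgdef
    set ε := 1 - x * g ^ 2 with hedef
    have hq2 : q ^ (2*n+2) ≤ 1 := pow_le_one₀ hq0.le hq1.le
    have heps1 : ε ≤ 1 := le_trans he1 hq2
    have hgam : gam (n+1) x = g * (3 - x * g ^ 2) / 2 := rfl
    have hkey : 1 - x * gam (n+1) x ^ 2 = (3 * ε ^ 2 + ε ^ 3) / 4 := by
      rw [hgam, hedef]; ring
    refine ⟨?_, ?_, ?_⟩
    · rw [hgam]
      have : 3 - x * g ^ 2 = 2 + ε := by rw [hedef]; ring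
      rw [this]
      positivity
    · rw [hkey]; positivity
    · rw [hkey]
      have h1 : (3 * ε ^ 2 + ε ^ 3) / 4 ≤ ε ^ 2 := by nlinarith
      have h2 : ε ^ 2 ≤ q ^ (2*n+2) * q ^ (2*n+2) := by nlinarith
      have h3 : q ^ (2*n+2) * q ^ (2*n+2) ≤ q ^ (2*(n+1)+2) := by
        rw [← pow_add]
        exact pow_le_pow_of_le_one hq0.le hq1.le (by omega)
      exact le_trans h1 (h2.trans h3)

noncomputable def copAux (M : H →L[ℂ] H) : ℕ → (H →L[ℂ] H)
  | 0 => 1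
  | n+1 => (2:ℂ)⁻¹ • (copAux M n * ((3:ℂ) • (1:H →L[ℂ] H) - M * (copAux M n * copAux M n)))
lemma key {q : ℝ} (hq0 : 0 < q) (hq1 : q < 1)
    (D : StarSubalgebra ℂ (H →L[ℂ] H)) (hD : IsClosed (D : Set (H →L[ℂ] H)))
    {σ : I' → I'} (hσ : Function.Injective σ) (s t : I' → ℝ)
    (hs1 : ∀ k, s k ≤ 1) (hs2 : ∀ k, 1 - s k ≤ q ^ 2)
    (ht0 : ∀ k, 0 ≤ t k) (ht1 : ∀ k, t k = 1 ∨ t k ≤ q)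
    (X Q M A : H →L[ℂ] H)
    (hX : ∀ k, X (e k) = ((Real.sqrt (s k) * t k : ℝ):ℂ) • e (σ k))
    (hQ : ∀ k, Q (e k) = ((t k ^ 2 : ℝ):ℂ) • e k)
    (hM : ∀ k, M (e k) = ((s k : ℝ):ℂ) • e k)
    (hA : ∀ k, A (e k) = (if t k = 1 then (1:ℂ) else 0) • e (σ k))
    (mX : X ∈ D) (mQ : Q ∈ D) (mM : M ∈ D) : A ∈ D := by
  have hq2lt : q ^ 2 < 1 := by nlinarith
  have hs0 : ∀ k, 0 ≤ s k := fun k => by have := hs2 k; nlinarith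
  -- membership of the correction operators
  have hCmem : ∀ n, copAux M n ∈ D := by
    intro n; induction n with
    | zero => exact one_mem D
    | succ n ih =>
      exact SMulMemClass.smul_mem _ (mul_mem ih (sub_mem (SMulMemClass.smul_mem _ (one_mem D))
        (mul_mem mM (mul_mem ih ih))))
  -- action of the correction operators
  have hC : ∀ n k, copAux M n (e k) = ((gam n (s k) : ℝ):ℂ) • e k := by
    intro n; induction n with
    | zero => intro k; simp [copAux, gam]
    | succ n ih =>
      intro k
      have e1 : (copAux M n * copAux M n) (e k)
          = ((gam n (s k) * gam n (s k) : ℝ):ℂ) • e k := by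
        rw [ContinuousLinearMap.mul_apply, ih, map_smul, ih, smul_smul]
        norm_cast
      have e2 : ((3:ℂ) • (1:H →L[ℂ] H) - M * (copAux M n * copAux M n)) (e k)
          = ((3 - s k * (gam n (s k) * gam n (s k)) : ℝ):ℂ) • e k := by
        rw [ContinuousLinearMap.sub_apply, ContinuousLinearMap.smul_apply,
          ContinuousLinearMap.one_apply, ContinuousLinearMap.mul_apply, e1, map_smul, hM k,
          smul_smul, ← sub_smul]
        congr 1; push_cast; ring
      have hrec : copAux M (n+1)
          = (2:ℂ)⁻¹ • (copAux M n * ((3:ℂ) • (1:H →L[ℂ] H)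
              - M * (copAux M n * copAux M n))) := rfl
      rw [hrec, ContinuousLinearMap.smul_apply, ContinuousLinearMap.mul_apply, e2, map_smul,
        ih, smul_smul, smul_smul]
      congr 1
      have hgam : gam (n+1) (s k) = gam n (s k) * (3 - s k * gam n (s k) ^ 2) / 2 := rfl
      rw [hgam]; push_cast; ring
  -- action of Q^n
  have hQn : ∀ n k, (Q ^ n) (e k) = ((t k ^ (2*n) : ℝ):ℂ) • e k := by
    intro n; induction n with
    | zero => intro k; simp
    | succ n ih =>
      intro k
      rw [pow_succ, ContinuousLinearMap.mul_apply, hQ, map_smul, ih, smul_smul]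
      congr 1; push_cast; ring
  -- the approximating operators
  set Tn : ℕ → (H →L[ℂ] H) := fun n => X * Q ^ n * copAux M n with hTndef
  have hTnmem : ∀ n, Tn n ∈ D := fun n => mul_mem (mul_mem mX (pow_mem mQ n)) (hCmem n)
  have hTnapp : ∀ n k, Tn n (e k)
      = ((Real.sqrt (s k) * t k * (t k ^ (2*n) * gam n (s k)) : ℝ):ℂ) • e (σ k) := by
    intro n k
    show (X * Q ^ n * copAux M n) (e k) = _
    rw [ContinuousLinearMap.mul_apply, ContinuousLinearMap.mul_apply, hC, map_smul, hQn,
      map_smul, map_smul, hX, smul_smul, smul_smul]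
    congr 1; push_cast; ring
  set c : ℕ → I' → ℝ := fun n k =>
    (if t k = 1 then (1:ℝ) else 0) - Real.sqrt (s k) * t k * (t k ^ (2*n) * gam n (s k))
    with hcdef
  have hdiff : ∀ n k, (A - Tn n) (e k) = ((c n k : ℝ):ℂ) • e (σ k) := by
    intro n k
    have hcast : ((c n k : ℝ):ℂ) = (if t k = 1 then (1:ℂ) else 0)
        - ((Real.sqrt (s k) * t k * (t k ^ (2*n) * gam n (s k)) : ℝ):ℂ) := by
      simp only [hcdef]; push_cast; split_ifs <;> simp
    rw [ContinuousLinearMap.sub_apply, hA, hTnapp, hcast, sub_smul]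
  -- coefficient bound
  have hcb : ∀ n k, |c n k| ≤ q ^ (2*n+1) := by
    intro n k
    obtain ⟨hg, he0, he1⟩ := gam_bounds hq0 hq1 (hs1 k) (hs2 k) n
    have hw2 : (Real.sqrt (s k) * gam n (s k)) ^ 2 = s k * gam n (s k) ^ 2 := by
      rw [mul_pow, Real.sq_sqrt (hs0 k)]
    have hw0 : 0 ≤ Real.sqrt (s k) * gam n (s k) := mul_nonneg (Real.sqrt_nonneg _) hg
    have hw1 : Real.sqrt (s k) * gam n (s k) ≤ 1 := by nlinarith
    have hwge : 1 - q ^ (2*n+2) ≤ Real.sqrt (s k) * gam n (s k) := by nlinarith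
    have hqpow : q ^ (2*n+2) ≤ q ^ (2*n+1) := pow_le_pow_of_le_one hq0.le hq1.le (by omega)
    have hqp0 : 0 < q ^ (2*n+1) := pow_pos hq0 _
    simp only [hcdef]
    rcases ht1 k with ht | ht
    · rw [if_pos ht, ht]
      simp only [one_pow, mul_one, one_mul]
      rw [abs_le]
      constructor <;> nlinarith
    · have htne : t k ≠ 1 := by intro h; rw [h] at ht; linarith
      rw [if_neg htne]
      have htp : t k ^ (2*n+1) ≤ q ^ (2*n+1) := pow_le_pow_left₀ (ht0 k) ht _
      have hX1 : Real.sqrt (s k) * t k * (t k ^ (2*n) * gam n (s k))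
          = (Real.sqrt (s k) * gam n (s k)) * t k ^ (2*n+1) := by ring
      rw [zero_sub, abs_neg, hX1, abs_of_nonneg (mul_nonneg hw0 (pow_nonneg (ht0 k) _))]
      calc Real.sqrt (s k) * gam n (s k) * t k ^ (2*n+1)
          ≤ 1 * t k ^ (2*n+1) := mul_le_mul_of_nonneg_right hw1 (pow_nonneg (ht0 k) _)
        _ = t k ^ (2*n+1) := one_mul _
        _ ≤ q ^ (2*n+1) := htp
  -- convergence
  have hnorm : ∀ n, ‖A - Tn n‖ ≤ q ^ (2*n+1) := fun n =>
    shift_norm_le hσ (pow_nonneg hq0.le _) (hcb n) (hdiff n)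
  have htend : Filter.Tendsto Tn Filter.atTop (nhds A) := by
    rw [tendsto_iff_norm_sub_tendsto_zero]
    refine squeeze_zero (fun n => norm_nonneg _) (fun n => ?_)
      (tendsto_pow_atTop_nhds_zero_of_lt_one hq0.le hq1)
    rw [norm_sub_rev]
    exact le_trans (hnorm n) (pow_le_pow_of_le_one hq0.le hq1.le (by omega))
  exact hD.mem_of_tendsto htend (Filter.Eventually.of_forall hTnmem)

set_option maxHeartbeats 1600000 in
/-- For every `q ∈ (0,1)`, the operators `A = t ⊗ S* ⊗ p` and `B = t ⊗ p ⊗ S*`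
both belong to `D₃⁴(q)`. -/
theorem stmt_3 (q : ℝ) (hq : q ∈ Set.Ioo (0 : ℝ) 1)
    (X₀ X₁ X₂ Y₁ : H →L[ℂ] H)
    (h0 : IsX₀ q X₀) (h1 : IsX₁ q X₁) (h2 : IsX₂ q X₂) (hY : IsY₁ q Y₁)
    (A B : H →L[ℂ] H)
    (hA : ∀ (r : ℤ) (a b : ℕ), A (e (r, a, b)) = if b = 0 then e (r + 1, a + 1, 0) else 0)
    (hB : ∀ (r : ℤ) (a b : ℕ), B (e (r, a, b)) = if a = 0 then e (r + 1, 0, b + 1) else 0) :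
    A ∈ D34 X₀ X₁ X₂ Y₁ ∧ B ∈ D34 X₀ X₁ X₂ Y₁ := by
  obtain ⟨hq0, hq1⟩ := hq
  set D := D34 X₀ X₁ X₂ Y₁ with hDdef
  have hDc : IsClosed (D : Set (H →L[ℂ] H)) :=
    StarSubalgebra.isClosed_topologicalClosure _
  have hmem : ∀ T ∈ ({X₀, X₁, X₂, Y₁} : Set (H →L[ℂ] H)), T ∈ D := fun T hT =>
    StarSubalgebra.le_topologicalClosure _ (StarAlgebra.subset_adjoin ℂ _ hT)
  have m0 : X₀ ∈ D := hmem _ (by simp)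
  have m1 : X₁ ∈ D := hmem _ (by simp)
  have mY : Y₁ ∈ D := hmem _ (by simp)
  -- basis actions in uncurried form
  have h0' : ∀ k : I', X₀ (e k) = ((q ^ (k.2.1 + k.2.2) : ℝ):ℂ)
      • e (k.1 + 1, k.2.1, k.2.2) := by rintro ⟨m,i,j⟩; exact h0 m i j
  have h1' : ∀ k : I', X₁ (e k) = ((Real.sqrt (1 - q ^ (2*k.2.1+2)) * q ^ k.2.2 : ℝ):ℂ)
      • e (k.1 + 1, k.2.1 + 1, k.2.2) := by rintro ⟨m,i,j⟩; exact h1 m i j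
  have hY' : ∀ k : I', Y₁ (e k) = ((q ^ k.2.1 * Real.sqrt (1 - q ^ (2*k.2.2+2)) : ℝ):ℂ)
      • e (k.1 + 1, k.2.1, k.2.2 + 1) := by rintro ⟨m,i,j⟩; exact hY m i j
  -- injectivity of the index shifts
  have hσ0 : Function.Injective (fun k : I' => (k.1 + 1, k.2.1, k.2.2) : I' → I') := by
    rintro ⟨m,i,j⟩ ⟨m',i',j'⟩ h
    simp only [Prod.mk.injEq] at h ⊢
    exact ⟨by omega, by omega, by omega⟩
  have hσ1 : Function.Injective (fun k : I' => (k.1 + 1, k.2.1 + 1, k.2.2) : I' → I') := by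
    rintro ⟨m,i,j⟩ ⟨m',i',j'⟩ h
    simp only [Prod.mk.injEq] at h ⊢
    exact ⟨by omega, by omega, by omega⟩
  have hσY : Function.Injective (fun k : I' => (k.1 + 1, k.2.1, k.2.2 + 1) : I' → I') := by
    rintro ⟨m,i,j⟩ ⟨m',i',j'⟩ h
    simp only [Prod.mk.injEq] at h ⊢
    exact ⟨by omega, by omega, by omega⟩
  -- diagonal building blocks
  have hS0 : ∀ k : I', (star X₀ * X₀) (e k) = (((q ^ (k.2.1 + k.2.2)) ^ 2 : ℝ):ℂ) • e k :=
    star_mul_self_apply hσ0 h0'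
  have hS1 : ∀ k : I', (star X₁ * X₁) (e k)
      = (((Real.sqrt (1 - q ^ (2*k.2.1+2)) * q ^ k.2.2) ^ 2 : ℝ):ℂ) • e k :=
    star_mul_self_apply hσ1 h1'
  have hSY : ∀ k : I', (star Y₁ * Y₁) (e k)
      = (((q ^ k.2.1 * Real.sqrt (1 - q ^ (2*k.2.2+2))) ^ 2 : ℝ):ℂ) • e k :=
    star_mul_self_apply hσY hY'
  have hsqA : ∀ i : ℕ, (0:ℝ) ≤ 1 - q ^ (2*i+2) := fun i => by
    nlinarith [pow_le_one₀ hq0.le hq1.le (n := 2*i+2)]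
  constructor
  · -- the operator A
    refine key hq0 hq1 D hDc hσ1 (fun k => 1 - q ^ (2*k.2.1+2)) (fun k => q ^ k.2.2)
      (fun k => by nlinarith [pow_nonneg hq0.le (2*k.2.1+2)])
      (fun k => by
        simp only [sub_sub_cancel]
        exact pow_le_pow_of_le_one hq0.le hq1.le (by omega))
      (fun k => pow_nonneg hq0.le _)
      (fun k => ?_)
      X₁ (star X₁ * X₁ + ((q^2 : ℝ):ℂ) • (star X₀ * X₀))
      (1 - ((q^2 : ℝ):ℂ) • (star Y₁ * Y₁) - ((q^4 : ℝ):ℂ) • (star X₀ * X₀))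
      A h1' (fun k => ?_) (fun k => ?_) (fun k => ?_)
      m1
      (add_mem (mul_mem (star_mem m1) m1)
        (SMulMemClass.smul_mem _ (mul_mem (star_mem m0) m0)))
      (sub_mem (sub_mem (one_mem D) (SMulMemClass.smul_mem _ (mul_mem (star_mem mY) mY)))
        (SMulMemClass.smul_mem _ (mul_mem (star_mem m0) m0)))
    · -- t k = 1 or t k ≤ q
      rcases Nat.eq_zero_or_pos k.2.2 with hj | hj
      · exact Or.inl (by rw [hj, pow_zero])
      · refine Or.inr ?_
        calc q ^ k.2.2 ≤ q ^ 1 := pow_le_pow_of_le_one hq0.le hq1.le hj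
        _ = q := pow_one q
    · -- action of Q
      obtain ⟨m,i,j⟩ := k
      rw [ContinuousLinearMap.add_apply, hS1, ContinuousLinearMap.smul_apply, hS0,
        smul_smul, ← add_smul]
      congr 1
      dsimp only
      rw [mul_pow, Real.sq_sqrt (hsqA i)]
      push_cast
      ring
    · -- action of M
      obtain ⟨m,i,j⟩ := k
      rw [ContinuousLinearMap.sub_apply, ContinuousLinearMap.sub_apply,
        ContinuousLinearMap.one_apply, ContinuousLinearMap.smul_apply, hSY,
        ContinuousLinearMap.smul_apply, hS0, smul_smul, smul_smul]
      nth_rewrite 1 [show e (m,i,j) = (1:ℂ) • e (m,i,j) from (one_smul ℂ _).symm]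
      rw [← sub_smul, ← sub_smul]
      congr 1
      dsimp only
      rw [mul_pow, Real.sq_sqrt (hsqA j)]
      push_cast
      ring
    · -- action of A
      obtain ⟨m,i,j⟩ := k
      rw [hA m i j]
      dsimp only
      by_cases hj : j = 0
      · subst hj
        rw [if_pos rfl, if_pos (pow_zero q), one_smul]
      · rw [if_neg hj, if_neg (ne_of_lt (pow_lt_one₀ hq0.le hq1 hj)), zero_smul]
  · -- the operator B
    refine key hq0 hq1 D hDc hσY (fun k => 1 - q ^ (2*k.2.2+2)) (fun k => q ^ k.2.1)
      (fun k => by nlinarith [pow_nonneg hq0.le (2*k.2.2+2)])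
      (fun k => by
        simp only [sub_sub_cancel]
        exact pow_le_pow_of_le_one hq0.le hq1.le (by omega))
      (fun k => pow_nonneg hq0.le _)
      (fun k => ?_)
      Y₁ (star Y₁ * Y₁ + ((q^2 : ℝ):ℂ) • (star X₀ * X₀))
      (1 - ((q^2 : ℝ):ℂ) • (star X₁ * X₁) - ((q^4 : ℝ):ℂ) • (star X₀ * X₀))
      B (fun k => ?_) (fun k => ?_) (fun k => ?_) (fun k => ?_)
      mY
      (add_mem (mul_mem (star_mem mY) mY)
        (SMulMemClass.smul_mem _ (mul_mem (star_mem m0) m0)))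
      (sub_mem (sub_mem (one_mem D) (SMulMemClass.smul_mem _ (mul_mem (star_mem m1) m1)))
        (SMulMemClass.smul_mem _ (mul_mem (star_mem m0) m0)))
    · -- t k = 1 or t k ≤ q
      rcases Nat.eq_zero_or_pos k.2.1 with hi | hi
      · exact Or.inl (by rw [hi, pow_zero])
      · refine Or.inr ?_
        calc q ^ k.2.1 ≤ q ^ 1 := pow_le_pow_of_le_one hq0.le hq1.le hi
        _ = q := pow_one q
    · -- action of X (here Y₁)
      rw [hY' k]
      congr 1
      push_cast
      ring
    · -- action of Q
      obtain ⟨m,i,j⟩ := k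
      rw [ContinuousLinearMap.add_apply, hSY, ContinuousLinearMap.smul_apply, hS0,
        smul_smul, ← add_smul]
      congr 1
      dsimp only
      rw [mul_pow, Real.sq_sqrt (hsqA j)]
      push_cast
      ring
    · -- action of M
      obtain ⟨m,i,j⟩ := k
      rw [ContinuousLinearMap.sub_apply, ContinuousLinearMap.sub_apply,
        ContinuousLinearMap.one_apply, ContinuousLinearMap.smul_apply, hS1,
        ContinuousLinearMap.smul_apply, hS0, smul_smul, smul_smul]
      nth_rewrite 1 [show e (m,i,j) = (1:ℂ) • e (m,i,j) from (one_smul ℂ _).symm]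
      rw [← sub_smul, ← sub_smul]
      congr 1
      dsimp only
      rw [mul_pow, Real.sq_sqrt (hsqA i)]
      push_cast
      ring
    · -- action of B
      obtain ⟨m,i,j⟩ := k
      rw [hB m i j]
      dsimp only
      by_cases hi : i = 0
      · subst hi
        rw [if_pos rfl, if_pos (pow_zero q), one_smul]
      · rw [if_neg hi, if_neg (ne_of_lt (pow_lt_one₀ hq0.le hq1 hi)), zero_smul]
end
end

section
/- For every q ∈ (0,1), all real numbers c₁, c₂ > 0 and every m ∈ ℤ, the operator on H defined on basis vectors by e_{r,i,j} ↦ q^{c₁ i + c₂ j} e_{r+m, i, j} (in tensor notation t^m⊗q^{c₁N}⊗q^{c₂N}) belongs to the undeformed algebra D₃⁴(0). -/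
noncomputable section

/-! ### Auxiliary infrastructure -/

local notation "⟪" x ", " y "⟫" => @inner ℂ _ _ x y

lemma coord (v : H) (x : ℤ × ℕ × ℕ) : ⟪e x, v⟫ = v x := by
  rw [e, lp.inner_single_left]; simp

lemma e_apply (x y : ℤ × ℕ × ℕ) : (e x : ∀ _ : ℤ × ℕ × ℕ, ℂ) y = if y = x then 1 else 0 := by
  rw [e, lp.single_apply]; by_cases h : y = x <;> simp [h]

lemma vec_ext {v w : H} (h : ∀ x, v x = w x) : v = w := lp.ext (funext h)

lemma e_congr {x y : ℤ × ℕ × ℕ} (h : x = y) : e x = e y := by rw [h]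

lemma star_coord (S : H →L[ℂ] H) {σ : ℤ × ℕ × ℕ → ℤ × ℕ × ℕ} {c : ℤ × ℕ × ℕ → ℂ}
    (hS : ∀ x, S (e x) = c x • e (σ x)) (y z : ℤ × ℕ × ℕ) :
    ((star S) (e y) : ∀ _ : ℤ × ℕ × ℕ, ℂ) z
      = (starRingEnd ℂ) (c z) * (if y = σ z then 1 else 0) := by
  rw [← coord, ContinuousLinearMap.star_eq_adjoint, ContinuousLinearMap.adjoint_inner_right,
    hS z, inner_smul_left, coord, e_apply]
  simp only [eq_comm]

lemma star_apply₁ (S : H →L[ℂ] H) {σ : ℤ × ℕ × ℕ → ℤ × ℕ × ℕ} (hσ : Function.Injective σ)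
    {c : ℤ × ℕ × ℕ → ℂ} (hS : ∀ x, S (e x) = c x • e (σ x)) (x : ℤ × ℕ × ℕ) :
    (star S) (e (σ x)) = (starRingEnd ℂ) (c x) • e x := by
  apply vec_ext; intro z
  rw [star_coord S hS]
  have : (((starRingEnd ℂ) (c x) • e x : H) : ∀ _ : ℤ × ℕ × ℕ, ℂ) z
      = (starRingEnd ℂ) (c x) * (e x : ∀ _ : ℤ × ℕ × ℕ, ℂ) z := rfl
  rw [this, e_apply]
  by_cases h : z = x
  · simp [h]
  · have : ¬ (σ x = σ z) := fun hh => h (hσ hh).symm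
    simp [h, this]

lemma star_apply₂ (S : H →L[ℂ] H) {σ : ℤ × ℕ × ℕ → ℤ × ℕ × ℕ}
    {c : ℤ × ℕ × ℕ → ℂ} (hS : ∀ x, S (e x) = c x • e (σ x)) {y : ℤ × ℕ × ℕ}
    (hy : ∀ x, σ x ≠ y) : (star S) (e y) = 0 := by
  apply vec_ext; intro z
  rw [star_coord S hS]
  simp [(hy z).symm]

lemma opNorm_le_one (S : H →L[ℂ] H) {σ : ℤ × ℕ × ℕ → ℤ × ℕ × ℕ} (hσ : Function.Injective σ)
    {c : ℤ × ℕ × ℕ → ℂ} (hS : ∀ x, S (e x) = c x • e (σ x)) (hc : ∀ x, ‖c x‖ ≤ 1) :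
    ‖S‖ ≤ 1 := by
  refine ContinuousLinearMap.opNorm_le_bound S zero_le_one (fun v => ?_)
  rw [one_mul]
  have hD : ∀ x, (star S * S) (e x) = ((‖c x‖ ^ 2 : ℝ) : ℂ) • e (id x) := by
    intro x
    rw [ContinuousLinearMap.mul_apply, hS x, map_smul, star_apply₁ S hσ hS, smul_smul]
    congr 1
    rw [Complex.mul_conj']
    norm_cast
  have hDstar := star_apply₁ (star S * S) (Function.injective_id)
      (c := fun x => ((‖c x‖ ^ 2 : ℝ) : ℂ)) hD
  simp only [id_eq] at hDstar
  have hDv : ∀ z : ℤ × ℕ × ℕ, ((star S * S) v) z = ((‖c z‖ ^ 2 : ℝ) : ℂ) * v z := by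
    intro z
    rw [← coord, ← ContinuousLinearMap.adjoint_inner_left, ← ContinuousLinearMap.star_eq_adjoint,
      hDstar z, inner_smul_left, coord]
    simp
  have h1 : HasSum (fun z : ℤ × ℕ × ℕ => ⟪v z, ((star S * S) v) z⟫) ⟪v, (star S * S) v⟫ :=
    lp.hasSum_inner v ((star S * S) v)
  have h2 : HasSum (fun z : ℤ × ℕ × ℕ => (⟪v z, ((star S * S) v) z⟫).re)
      (⟪v, (star S * S) v⟫).re := Complex.hasSum_re h1
  have h3 : ∀ z : ℤ × ℕ × ℕ, (⟪v z, ((star S * S) v) z⟫).re = ‖c z‖ ^ 2 * ‖v z‖ ^ 2 := by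
    intro z
    rw [hDv z]
    have : ⟪v z, ((‖c z‖ ^ 2 : ℝ) : ℂ) * v z⟫ = ((‖c z‖ ^ 2 * ‖v z‖ ^ 2 : ℝ) : ℂ) := by
      rw [RCLike.inner_apply, mul_assoc, Complex.mul_conj']
      push_cast
      ring
    rw [this, Complex.ofReal_re]
  have h4 : HasSum (fun z : ℤ × ℕ × ℕ => ‖c z‖ ^ 2 * ‖v z‖ ^ 2) (⟪v, (star S * S) v⟫).re := by
    simpa only [h3] using h2
  have h5 : HasSum (fun z : ℤ × ℕ × ℕ => ‖v z‖ ^ 2) (‖v‖ ^ 2) := by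
    have := lp.hasSum_norm (p := 2) (by norm_num) v
    simpa [Real.rpow_natCast] using this
  have hb : (⟪v, (star S * S) v⟫).re ≤ ‖v‖ ^ 2 := by
    refine hasSum_le (fun z => ?_) h4 h5
    have : ‖c z‖ ^ 2 ≤ 1 := by
      have := hc z
      nlinarith [norm_nonneg (c z)]
    nlinarith [sq_nonneg (‖v z‖)]
  have key : ‖S v‖ ^ 2 ≤ ‖v‖ ^ 2 := by
    have e1 : ⟪v, (star S * S) v⟫ = ⟪S v, S v⟫ := by
      rw [ContinuousLinearMap.mul_apply, ContinuousLinearMap.star_eq_adjoint,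
        ContinuousLinearMap.adjoint_inner_right]
    have e2 : ‖S v‖ ^ 2 = (⟪S v, S v⟫).re := InnerProductSpace.norm_sq_eq_re_inner (𝕜 := ℂ) (S v)
    rw [e2, ← e1]
    exact hb
  exact le_of_pow_le_pow_left₀ two_ne_zero (norm_nonneg v) key

/-! ### Basis actions of the generators at `q = 0` -/

section ops
variable {X₀ X₁ X₂ Y₁ : H →L[ℂ] H}
open ContinuousLinearMap

lemma zpow0 {n : ℕ} (hn : n ≠ 0) : (0:ℝ) ^ n = 0 := zero_pow hn

lemma X0app (h0 : IsX₀ 0 X₀) (r : ℤ) (i j : ℕ) :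
    X₀ (e (r, i, j)) = (if i = 0 ∧ j = 0 then (1:ℂ) else 0) • e (r + 1, i, j) := by
  rw [h0 r i j]
  congr 1
  rcases Nat.eq_zero_or_pos (i + j) with h | h
  · obtain ⟨hi, hj⟩ := Nat.add_eq_zero.mp h
    simp [hi, hj]
  · rw [zpow0 (by omega)]
    simp only [Complex.ofReal_zero]
    rw [if_neg (by omega)]

lemma X0appX (h0 : IsX₀ 0 X₀) (x : ℤ × ℕ × ℕ) :
    X₀ (e x) = (if x.2.1 = 0 ∧ x.2.2 = 0 then (1:ℂ) else 0) • e (x.1 + 1, x.2) := by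
  obtain ⟨r, i, j⟩ := x
  exact X0app h0 r i j

lemma X0app00 (h0 : IsX₀ 0 X₀) (r : ℤ) : X₀ (e (r, 0, 0)) = e (r + 1, 0, 0) := by
  rw [X0app h0 r 0 0]; simp

lemma X2app (h2 : IsX₂ 0 X₂) (r : ℤ) (i j : ℕ) :
    X₂ (e (r, i, j)) = e (r + 1, i + 1, j + 1) := by
  rw [h2 r i j, zpow0 (by omega : 2*i+2 ≠ 0), zpow0 (by omega : 2*j+2 ≠ 0)]
  norm_num

lemma X1app0 (h1 : IsX₁ 0 X₁) (r : ℤ) (i : ℕ) :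
    X₁ (e (r, i, 0)) = e (r + 1, i + 1, 0) := by
  rw [h1 r i 0, zpow0 (by omega : 2*i+2 ≠ 0)]
  norm_num

lemma Y1app0 (hY : IsY₁ 0 Y₁) (r : ℤ) (j : ℕ) :
    Y₁ (e (r, 0, j)) = e (r + 1, 0, j + 1) := by
  rw [hY r 0 j, zpow0 (by omega : 2*j+2 ≠ 0)]
  norm_num

lemma X2pow (h2 : IsX₂ 0 X₂) (k : ℕ) (r : ℤ) (a b : ℕ) :
    (X₂ ^ k) (e (r, a, b)) = e (r + k, a + k, b + k) := by
  induction k generalizing r a b with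
  | zero => simp
  | succ n ih =>
    rw [pow_succ', ContinuousLinearMap.mul_apply, ih, X2app h2]
    refine e_congr ?_; simp only [Prod.mk.injEq, and_true, true_and]; omega

lemma X1pow (h1 : IsX₁ 0 X₁) (k : ℕ) (r : ℤ) (a : ℕ) :
    (X₁ ^ k) (e (r, a, 0)) = e (r + k, a + k, 0) := by
  induction k generalizing r a with
  | zero => simp
  | succ n ih =>
    rw [pow_succ', ContinuousLinearMap.mul_apply, ih, X1app0 h1]
    refine e_congr ?_; simp only [Prod.mk.injEq, and_true, true_and]; omega

lemma Y1pow (hY : IsY₁ 0 Y₁) (k : ℕ) (r : ℤ) (b : ℕ) :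
    (Y₁ ^ k) (e (r, 0, b)) = e (r + k, 0, b + k) := by
  induction k generalizing r b with
  | zero => simp
  | succ n ih =>
    rw [pow_succ', ContinuousLinearMap.mul_apply, ih, Y1app0 hY]
    refine e_congr ?_; simp only [Prod.mk.injEq, and_true, true_and]; omega

lemma X0pow (h0 : IsX₀ 0 X₀) (k : ℕ) (r : ℤ) :
    (X₀ ^ k) (e (r, 0, 0)) = e (r + k, 0, 0) := by
  induction k generalizing r with
  | zero => simp
  | succ n ih =>
    rw [pow_succ', ContinuousLinearMap.mul_apply, ih, X0app00 h0]
    refine e_congr ?_; simp only [Prod.mk.injEq, and_true, true_and]; omega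

lemma starX0inj : Function.Injective (fun y : ℤ × ℕ × ℕ => ((y.1 + 1 : ℤ), y.2)) := by
  intro a b hab
  simp only [Prod.mk.injEq] at hab
  exact Prod.ext (by omega) hab.2

lemma starX0app (h0 : IsX₀ 0 X₀) (r : ℤ) (i j : ℕ) :
    (star X₀) (e (r, i, j)) = (if i = 0 ∧ j = 0 then (1:ℂ) else 0) • e (r - 1, i, j) := by
  have h := star_apply₁ X₀ starX0inj
    (c := fun y => if y.2.1 = 0 ∧ y.2.2 = 0 then (1:ℂ) else 0) (X0appX h0) (r - 1, i, j)
  rw [show ((r : ℤ), (i : ℕ), (j : ℕ)) = ((r - 1 + 1 : ℤ), (i : ℕ), (j : ℕ)) from by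
    simp only [Prod.mk.injEq, and_true, true_and]; omega]
  refine h.trans ?_
  by_cases hij : i = 0 ∧ j = 0 <;> simp [hij]

lemma starX0pow (h0 : IsX₀ 0 X₀) (k : ℕ) (r : ℤ) :
    ((star X₀) ^ k) (e (r, 0, 0)) = e (r - k, 0, 0) := by
  induction k generalizing r with
  | zero => simp
  | succ n ih =>
    have hst := starX0app h0 (r - n) 0 0
    rw [if_pos ⟨rfl, rfl⟩, one_smul] at hst
    rw [pow_succ', ContinuousLinearMap.mul_apply, ih, hst]
    refine e_congr ?_; simp only [Prod.mk.injEq, and_true, true_and]; omega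

end ops

/-! ### The block operators -/

noncomputable def Vop (X₀ X₁ X₂ Y₁ : H →L[ℂ] H) (i j : ℕ) : H →L[ℂ] H :=
  X₂ ^ (min i j) * X₁ ^ (i - j) * Y₁ ^ (j - i) * (star X₀ * X₀)

noncomputable def A0 (X₀ : H →L[ℂ] H) (n : ℤ) : H →L[ℂ] H :=
  if 0 ≤ n then X₀ ^ n.toNat else (star X₀) ^ (-n).toNat

noncomputable def Gop (X₀ X₁ X₂ Y₁ : H →L[ℂ] H) (m : ℤ) (i j : ℕ) : H →L[ℂ] H :=
  Vop X₀ X₁ X₂ Y₁ i j * (A0 X₀ m * star (Vop X₀ X₁ X₂ Y₁ i j))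

section B
variable {X₀ X₁ X₂ Y₁ : H →L[ℂ] H}
variable (h0 : IsX₀ 0 X₀) (h1 : IsX₁ 0 X₁) (h2 : IsX₂ 0 X₂) (hY : IsY₁ 0 Y₁)
open ContinuousLinearMap

include h0 h1 h2 hY

lemma Vapp (i j : ℕ) (r : ℤ) (a b : ℕ) :
    Vop X₀ X₁ X₂ Y₁ i j (e (r, a, b))
      = (if a = 0 ∧ b = 0 then (1:ℂ) else 0) •
          e (r + (max i j : ℕ), a + i, b + j) := by
  simp only [Vop, ContinuousLinearMap.mul_apply]
  rw [X0app h0 r a b]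
  by_cases hab : a = 0 ∧ b = 0
  · obtain ⟨rfl, rfl⟩ := hab
    rw [if_pos ⟨rfl, rfl⟩, one_smul, one_smul]
    rw [starX0app h0 (r + 1) 0 0, if_pos ⟨rfl, rfl⟩, one_smul]
    rw [show (r + 1 - 1 : ℤ) = r from by ring]
    rcases le_total i j with h | h
    · rw [Nat.sub_eq_zero_of_le h, pow_zero, min_eq_left h]
      rw [Y1pow hY (j - i) r 0, ContinuousLinearMap.one_apply, X2pow h2]
      refine e_congr ?_; simp only [Prod.mk.injEq, and_true, true_and]; omega
    · rw [Nat.sub_eq_zero_of_le h, pow_zero, min_eq_right h, ContinuousLinearMap.one_apply]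
      rw [X1pow h1 (i - j) r 0, X2pow h2]
      refine e_congr ?_; simp only [Prod.mk.injEq, and_true, true_and]; omega
  · rw [if_neg hab, zero_smul]
    simp

lemma VappX (i j : ℕ) (x : ℤ × ℕ × ℕ) :
    Vop X₀ X₁ X₂ Y₁ i j (e x)
      = (if x.2.1 = 0 ∧ x.2.2 = 0 then (1:ℂ) else 0) •
          e (x.1 + (max i j : ℕ), x.2.1 + i, x.2.2 + j) := by
  obtain ⟨r, a, b⟩ := x
  exact Vapp h0 h1 h2 hY i j r a b

omit h0 h1 h2 hY in
lemma Vinj (i j : ℕ) : Function.Injective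
    (fun x : ℤ × ℕ × ℕ => ((x.1 + (max i j : ℕ) : ℤ), x.2.1 + i, x.2.2 + j)) := by
  intro x y hxy
  simp only [Prod.mk.injEq] at hxy
  exact Prod.ext (by omega) (Prod.ext (by omega) (by omega))

lemma starVapp₁ (i j : ℕ) (s : ℤ) :
    (star (Vop X₀ X₁ X₂ Y₁ i j)) (e (s, i, j)) = e (s - (max i j : ℕ), 0, 0) := by
  have h := star_apply₁ (Vop X₀ X₁ X₂ Y₁ i j) (Vinj i j)
    (c := fun x => if x.2.1 = 0 ∧ x.2.2 = 0 then (1:ℂ) else 0)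
    (VappX h0 h1 h2 hY i j) (s - (max i j : ℕ), 0, 0)
  rw [show ((s : ℤ), i, j)
      = ((s - (max i j : ℕ) + (max i j : ℕ) : ℤ), (0 + i : ℕ), (0 + j : ℕ)) from
    by simp only [Prod.mk.injEq, and_true, true_and]; omega]
  exact h.trans (by norm_num)

lemma starVapp₂ (i j : ℕ) (s : ℤ) (a b : ℕ) (hab : ¬(a = i ∧ b = j)) :
    (star (Vop X₀ X₁ X₂ Y₁ i j)) (e (s, a, b)) = 0 := by
  by_cases hle : i ≤ a ∧ j ≤ b
  · have h := star_apply₁ (Vop X₀ X₁ X₂ Y₁ i j) (Vinj i j)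
      (c := fun x => if x.2.1 = 0 ∧ x.2.2 = 0 then (1:ℂ) else 0)
      (VappX h0 h1 h2 hY i j) (s - (max i j : ℕ), a - i, b - j)
    rw [show ((s : ℤ), a, b)
        = ((s - (max i j : ℕ) + (max i j : ℕ) : ℤ), (a - i + i : ℕ), (b - j + j : ℕ)) from
      by simp only [Prod.mk.injEq, and_true, true_and]; omega]
    refine h.trans ?_
    rw [if_neg (by simp only; omega)]
    simp
  · refine star_apply₂ (Vop X₀ X₁ X₂ Y₁ i j)
      (c := fun x => if x.2.1 = 0 ∧ x.2.2 = 0 then (1:ℂ) else 0)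
      (VappX h0 h1 h2 hY i j) (fun x hx => ?_)
    simp only [Prod.mk.injEq] at hx
    omega

omit h1 h2 hY in
lemma A0app (n : ℤ) (s : ℤ) : A0 X₀ n (e (s, 0, 0)) = e (s + n, 0, 0) := by
  unfold A0
  split_ifs with hn
  · rw [X0pow h0]
    refine e_congr ?_; simp only [Prod.mk.injEq, and_true, true_and]; omega
  · rw [starX0pow h0]
    refine e_congr ?_; simp only [Prod.mk.injEq, and_true, true_and]; omega

lemma Gapp (m : ℤ) (i j : ℕ) (r : ℤ) (a b : ℕ) :
    Gop X₀ X₁ X₂ Y₁ m i j (e (r, a, b))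
      = (if a = i ∧ b = j then (1:ℂ) else 0) • e (r + m, a, b) := by
  simp only [Gop, ContinuousLinearMap.mul_apply]
  by_cases hab : a = i ∧ b = j
  · obtain ⟨rfl, rfl⟩ := hab
    rw [starVapp₁ h0 h1 h2 hY, A0app h0, Vapp h0 h1 h2 hY, if_pos ⟨rfl, rfl⟩,
      if_pos ⟨rfl, rfl⟩, one_smul, one_smul]
    refine e_congr ?_; simp only [Prod.mk.injEq, and_true, true_and]; omega
  · rw [starVapp₂ h0 h1 h2 hY i j r a b hab, map_zero, map_zero, if_neg hab, zero_smul]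

omit h0 h1 h2 hY in
lemma Gmem {m : ℤ} {i j : ℕ} :
    Gop X₀ X₁ X₂ Y₁ m i j ∈ StarAlgebra.adjoin ℂ ({X₀, X₁, X₂, Y₁} : Set (H →L[ℂ] H)) := by
  have m0 : X₀ ∈ StarAlgebra.adjoin ℂ ({X₀, X₁, X₂, Y₁} : Set (H →L[ℂ] H)) :=
    StarAlgebra.subset_adjoin ℂ _ (by simp)
  have m1 : X₁ ∈ StarAlgebra.adjoin ℂ ({X₀, X₁, X₂, Y₁} : Set (H →L[ℂ] H)) :=
    StarAlgebra.subset_adjoin ℂ _ (by simp)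
  have m2 : X₂ ∈ StarAlgebra.adjoin ℂ ({X₀, X₁, X₂, Y₁} : Set (H →L[ℂ] H)) :=
    StarAlgebra.subset_adjoin ℂ _ (by simp)
  have mY : Y₁ ∈ StarAlgebra.adjoin ℂ ({X₀, X₁, X₂, Y₁} : Set (H →L[ℂ] H)) :=
    StarAlgebra.subset_adjoin ℂ _ (by simp)
  have mV : Vop X₀ X₁ X₂ Y₁ i j ∈ StarAlgebra.adjoin ℂ ({X₀, X₁, X₂, Y₁} : Set (H →L[ℂ] H)) :=
    mul_mem (mul_mem (mul_mem (pow_mem m2 _) (pow_mem m1 _)) (pow_mem mY _))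
      (mul_mem (star_mem m0) m0)
  have mA : A0 X₀ m ∈ StarAlgebra.adjoin ℂ ({X₀, X₁, X₂, Y₁} : Set (H →L[ℂ] H)) := by
    unfold A0; split
    · exact pow_mem m0 _
    · exact pow_mem (star_mem m0) _
  exact mul_mem mV (mul_mem mA (star_mem mV))

end B

lemma dense_span_e : Dense ((Submodule.span ℂ (Set.range e) : Submodule ℂ H) : Set H) := by
  rw [dense_iff_closure_eq]
  refine Set.eq_univ_of_forall fun f => ?_
  have hsum := lp.hasSum_single (E := fun _ : ℤ × ℕ × ℕ => ℂ) ENNReal.ofNat_ne_top f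
  refine mem_closure_of_tendsto hsum (Filter.Eventually.of_forall fun s => ?_)
  refine sum_mem fun x _ => ?_
  have hx : lp.single (E := fun _ : ℤ × ℕ × ℕ => ℂ) 2 x (f x) = f x • e x := by
    rw [e, ← lp.single_smul]
    congr 1
    simp
  rw [hx]
  exact Submodule.smul_mem _ _ (Submodule.subset_span ⟨x, rfl⟩)

set_option maxHeartbeats 1000000 in
/-- For every `q ∈ (0,1)`, reals `c₁, c₂ > 0` and `m ∈ ℤ`, the operator
`t^m ⊗ q^{c₁N} ⊗ q^{c₂N} : e_{r,i,j} ↦ q^{c₁i + c₂j} e_{r+m,i,j}` belongs to `D₃⁴(0)`. -/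
theorem stmt_5 (q : ℝ) (hq : q ∈ Set.Ioo (0 : ℝ) 1)
    (X₀ X₁ X₂ Y₁ : H →L[ℂ] H)
    (h0 : IsX₀ 0 X₀) (h1 : IsX₁ 0 X₁) (h2 : IsX₂ 0 X₂) (hY : IsY₁ 0 Y₁)
    (c₁ c₂ : ℝ) (hc₁ : 0 < c₁) (hc₂ : 0 < c₂) (m : ℤ)
    (T : H →L[ℂ] H)
    (hT : ∀ (r : ℤ) (i j : ℕ),
      T (e (r, i, j)) = ((q ^ (c₁ * i + c₂ * j) : ℝ) : ℂ) • e (r + m, i, j)) :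
    T ∈ D34 X₀ X₁ X₂ Y₁ := by
  classical
  obtain ⟨hq0, hq1⟩ := hq
  have hGnorm : ∀ i j : ℕ, ‖Gop X₀ X₁ X₂ Y₁ m i j‖ ≤ 1 := by
    intro i j
    refine opNorm_le_one _ (σ := fun x : ℤ × ℕ × ℕ => (x.1 + m, x.2))
      (c := fun x : ℤ × ℕ × ℕ => if x.2.1 = i ∧ x.2.2 = j then (1:ℂ) else 0)
      ?_ ?_ ?_
    · intro x y hxy
      simp only [Prod.mk.injEq] at hxy
      exact Prod.ext (by omega) hxy.2
    · intro x
      obtain ⟨r, a, b⟩ := x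
      exact Gapp h0 h1 h2 hY m i j r a b
    · intro x
      show ‖if x.2.1 = i ∧ x.2.2 = j then (1:ℂ) else 0‖ ≤ 1
      split <;> norm_num
  set lam : ℕ × ℕ → ℝ := fun p => q ^ (c₁ * p.1 + c₂ * p.2) with hlam
  have hlam_nonneg : ∀ p, 0 ≤ lam p := fun p => Real.rpow_nonneg (le_of_lt hq0) _
  have hlam_sum : Summable lam := by
    have hfe : lam = fun p : ℕ × ℕ => (q ^ c₁) ^ p.1 * (q ^ c₂) ^ p.2 := by
      funext p
      rw [hlam]
      simp only
      rw [Real.rpow_add hq0, ← Real.rpow_natCast (q ^ c₁) p.1, ← Real.rpow_natCast (q ^ c₂) p.2,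
        ← Real.rpow_mul (le_of_lt hq0), ← Real.rpow_mul (le_of_lt hq0)]
    rw [hfe]
    have g1 : Summable fun n : ℕ => (q ^ c₁) ^ n :=
      summable_geometric_of_lt_one (Real.rpow_nonneg (le_of_lt hq0) _)
        (Real.rpow_lt_one (le_of_lt hq0) hq1 hc₁)
    have g2 : Summable fun n : ℕ => (q ^ c₂) ^ n :=
      summable_geometric_of_lt_one (Real.rpow_nonneg (le_of_lt hq0) _)
        (Real.rpow_lt_one (le_of_lt hq0) hq1 hc₂)
    exact g1.mul_of_nonneg g2 (fun n => pow_nonneg (Real.rpow_nonneg (le_of_lt hq0) _) _)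
      (fun n => pow_nonneg (Real.rpow_nonneg (le_of_lt hq0) _) _)
  set F : ℕ × ℕ → (H →L[ℂ] H) :=
    fun p => ((lam p : ℝ) : ℂ) • Gop X₀ X₁ X₂ Y₁ m p.1 p.2 with hF
  have hFsum : Summable F := by
    refine Summable.of_norm (Summable.of_nonneg_of_le (fun p => norm_nonneg _) (fun p => ?_)
      hlam_sum)
    simp only [hF]
    refine le_trans (ContinuousLinearMap.opNorm_smul_le _ _) ?_
    rw [Complex.norm_real, Real.norm_eq_abs, abs_of_nonneg (hlam_nonneg p)]
    calc lam p * ‖Gop X₀ X₁ X₂ Y₁ m p.1 p.2‖ ≤ lam p * 1 :=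
          mul_le_mul_of_nonneg_left (hGnorm p.1 p.2) (hlam_nonneg p)
      _ = lam p := mul_one _
  obtain ⟨S, hS⟩ := hFsum
  have hSmem : S ∈ D34 X₀ X₁ X₂ Y₁ := by
    refine mem_closure_of_tendsto hS (Filter.Eventually.of_forall fun s => ?_)
    refine sum_mem fun p _ => ?_
    simp only [hF]
    rw [Algebra.smul_def]
    exact mul_mem (algebraMap_mem _ _) Gmem
  have hTS : T = S := by
    refine ContinuousLinearMap.ext_on dense_span_e ?_
    rintro v ⟨x, rfl⟩
    obtain ⟨r, a, b⟩ := x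
    have happ : HasSum (fun p => (F p) (e (r, a, b))) (S (e (r, a, b))) := by
      have h' := hS.mapL (ContinuousLinearMap.apply ℂ H (e (r, a, b)))
      simpa only [ContinuousLinearMap.apply_apply] using h'
    have hval : HasSum (fun p => (F p) (e (r, a, b)))
        (((lam (a, b) : ℝ) : ℂ) • e (r + m, a, b)) := by
      have hfun : (fun p : ℕ × ℕ => (F p) (e (r, a, b)))
          = fun p => if p = (a, b) then ((lam (a, b) : ℝ) : ℂ) • e (r + m, a, b) else 0 := by
        funext p
        obtain ⟨i, j⟩ := p
        rw [hF]
        simp only [ContinuousLinearMap.smul_apply]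
        rw [Gapp h0 h1 h2 hY m i j r a b]
        by_cases hp : (i, j) = ((a : ℕ), (b : ℕ))
        · simp only [Prod.mk.injEq] at hp
          obtain ⟨rfl, rfl⟩ := hp
          rw [if_pos rfl, if_pos ⟨rfl, rfl⟩, one_smul]
        · rw [if_neg hp, if_neg (by simp only [Prod.mk.injEq] at hp ⊢; tauto), zero_smul,
            smul_zero]
      rw [hfun]
      exact hasSum_ite_eq (a, b) _
    rw [hT r a b, happ.unique hval, hlam]
  rw [hTS]
  exact hSmem
end
end

section
/- For every q ∈ (0,1), the undeformed algebra D₃⁴(0) is contained in D₃⁴(q); that is, each of X₀(0), X₁(0), X₂(0), Y₁(0) belongs to the unital C*-algebra generated by the deformed operators X₀(q), X₁(q), X₂(q), Y₁(q). -/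
noncomputable section

/-! ### basis infrastructure -/

def bH : HilbertBasis (ℤ × ℕ × ℕ) ℂ H := HilbertBasis.ofRepr (LinearIsometryEquiv.refl ℂ H)

lemma bH_eq (x : ℤ × ℕ × ℕ) : bH x = e x := by
  rw [← bH.repr_symm_single]; rfl

lemma e_orthonormal : Orthonormal ℂ e := by
  have := bH.orthonormal
  rwa [funext bH_eq] at this

lemma inner_e_s8 (x y : ℤ × ℕ × ℕ) : (inner ℂ (e x) (e y) : ℂ) = if x = y then 1 else 0 := by
  have := orthonormal_iff_ite.mp e_orthonormal x y
  simpa using this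

lemma ext_e {v w : H} (h : ∀ x, (inner ℂ (e x) v : ℂ) = inner ℂ (e x) w) : v = w := by
  have : bH.repr v = bH.repr w := by
    apply lp.ext; funext x
    rw [bH.repr_apply_apply, bH.repr_apply_apply, bH_eq]
    exact h x
  exact bH.repr.injective this

lemma star_apply_shift (T : H →L[ℂ] H) (σ : ℤ × ℕ × ℕ → ℤ × ℕ × ℕ)
    (hσ : Function.Injective σ) (c : ℤ × ℕ × ℕ → ℝ)
    (hT : ∀ y, T (e y) = ((c y : ℝ) : ℂ) • e (σ y)) (x : ℤ × ℕ × ℕ) :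
    (star T) (e (σ x)) = ((c x : ℝ) : ℂ) • e x := by
  apply ext_e; intro y
  rw [ContinuousLinearMap.star_eq_adjoint, ContinuousLinearMap.adjoint_inner_right, hT y,
    inner_smul_left, inner_smul_right, inner_e_s8, inner_e_s8]
  by_cases h : y = x
  · subst h; simp [Complex.conj_ofReal]
  · rw [if_neg (fun hh => h (hσ hh)), if_neg h]; simp

open Finset in
lemma norm_sum_sq (f : ℤ × ℕ × ℕ → H) (hf : Orthonormal ℂ f) (s : Finset (ℤ × ℕ × ℕ))
    (a : ℤ × ℕ × ℕ → ℂ) :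
    ‖∑ x ∈ s, a x • f x‖ ^ 2 = ∑ x ∈ s, ‖a x‖ ^ 2 := by
  have h := hf.inner_sum a a s
  have h2 : (inner ℂ (∑ x ∈ s, a x • f x) (∑ x ∈ s, a x • f x) : ℂ)
      = ((∑ x ∈ s, ‖a x‖ ^ 2 : ℝ) : ℂ) := by
    rw [h]
    push_cast
    refine Finset.sum_congr rfl fun x _ => ?_
    rw [RCLike.conj_mul]
    norm_cast
  have h3 := inner_self_eq_norm_sq (𝕜 := ℂ) (∑ x ∈ s, a x • f x)
  rw [h2] at h3
  rw [← h3]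
  norm_cast

lemma opNorm_le_of_shift (T : H →L[ℂ] H) (σ : ℤ × ℕ × ℕ → ℤ × ℕ × ℕ)
    (hσ : Function.Injective σ) (c : ℤ × ℕ × ℕ → ℝ) (C : ℝ) (hC : 0 ≤ C)
    (hT : ∀ x, T (e x) = ((c x : ℝ) : ℂ) • e (σ x)) (hc : ∀ x, |c x| ≤ C) : ‖T‖ ≤ C := by
  refine T.opNorm_le_bound hC fun v => ?_
  have key : ∀ w ∈ Submodule.span ℂ (Set.range e), ‖T w‖ ≤ C * ‖w‖ := by
    intro w hw
    obtain ⟨l, rfl⟩ := Finsupp.mem_span_range_iff_exists_finsupp.mp hw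
    have hw1 : (l.sum fun x a => a • e x) = ∑ x ∈ l.support, l x • e x := rfl
    rw [hw1]
    have hT' : T (∑ x ∈ l.support, l x • e x) = ∑ x ∈ l.support, (l x * (c x : ℂ)) • e (σ x) := by
      rw [map_sum]
      refine Finset.sum_congr rfl fun x _ => ?_
      rw [map_smul, hT x, smul_smul]
    rw [hT']
    have h1 := norm_sum_sq (fun x => e (σ x)) (e_orthonormal.comp σ hσ) l.support
      (fun x => l x * (c x : ℂ))
    have h2 := norm_sum_sq e e_orthonormal l.support (fun x => l x)
    have hsq : ‖∑ x ∈ l.support, (l x * (c x : ℂ)) • e (σ x)‖ ^ 2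
        ≤ (C * ‖∑ x ∈ l.support, l x • e x‖) ^ 2 := by
      rw [h1, mul_pow, h2, Finset.mul_sum]
      refine Finset.sum_le_sum fun x _ => ?_
      rw [norm_mul, mul_pow, Complex.norm_real, mul_comm]
      have : ‖c x‖ ^ 2 ≤ C ^ 2 := by
        rw [Real.norm_eq_abs]
        exact pow_le_pow_left₀ (abs_nonneg _) (hc x) 2
      exact mul_le_mul_of_nonneg_right this (by positivity)
    have := Real.sqrt_le_sqrt hsq
    rwa [Real.sqrt_sq (norm_nonneg _), Real.sqrt_sq (by positivity)] at this
  have hdense : Dense (Submodule.span ℂ (Set.range e) : Set H) := by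
    have := bH.dense_span
    rw [funext bH_eq] at this
    rw [dense_iff_closure_eq, ← Submodule.topologicalClosure_coe, this]
    rfl
  have hclosed : IsClosed {w : H | ‖T w‖ ≤ C * ‖w‖} :=
    isClosed_le (T.continuous.norm) (continuous_const.mul continuous_norm)
  exact closure_minimal (fun w hw => key w hw) hclosed (hdense v)

/-! ### diagonal operators -/

lemma diag_pow (A : H →L[ℂ] H) (a : ℤ × ℕ × ℕ → ℝ)
    (hA : ∀ x, A (e x) = ((a x : ℝ) : ℂ) • e x) (n : ℕ) (x : ℤ × ℕ × ℕ) :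
    (A ^ n) (e x) = ((a x ^ n : ℝ) : ℂ) • e x := by
  induction n with
  | zero => simp
  | succ n ih =>
    rw [pow_succ, ContinuousLinearMap.mul_apply, hA, map_smul, ih, smul_smul]
    push_cast
    ring_nf

lemma diag_poly (A : H →L[ℂ] H) (a : ℤ × ℕ × ℕ → ℝ)
    (hA : ∀ x, A (e x) = ((a x : ℝ) : ℂ) • e x) (p : Polynomial ℝ) (x : ℤ × ℕ × ℕ) :
    (Polynomial.aeval A (p.map (algebraMap ℝ ℂ))) (e x)
      = ((p.eval (a x) : ℝ) : ℂ) • e x := by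
  induction p using Polynomial.induction_on with
  | C r =>
    rw [Polynomial.map_C, Polynomial.aeval_C, Polynomial.eval_C,
      Algebra.algebraMap_eq_smul_one, ContinuousLinearMap.smul_apply,
      ContinuousLinearMap.one_apply]
    norm_num
  | add p q hp hq =>
    rw [Polynomial.map_add, map_add, ContinuousLinearMap.add_apply, hp, hq,
      Polynomial.eval_add]
    push_cast
    rw [add_smul]
  | monomial n r ih =>
    have hmap : (Polynomial.C r * Polynomial.X ^ (n + 1)).map (algebraMap ℝ ℂ)
        = ((Polynomial.C r * Polynomial.X ^ n).map (algebraMap ℝ ℂ)) * Polynomial.X := by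
      rw [Polynomial.map_mul, Polynomial.map_mul, Polynomial.map_pow, Polynomial.map_X,
        pow_succ, mul_assoc, Polynomial.map_pow, Polynomial.map_X]
    rw [hmap, map_mul, Polynomial.aeval_X, ContinuousLinearMap.mul_apply, hA, map_smul, ih,
      smul_smul, Polynomial.eval_mul, Polynomial.eval_mul, Polynomial.eval_C,
      Polynomial.eval_pow, Polynomial.eval_X, Polynomial.eval_pow, Polynomial.eval_X]
    push_cast
    ring_nf

/-! ### shifts and coefficients -/

def σ₀ : ℤ × ℕ × ℕ → ℤ × ℕ × ℕ := fun x => (x.1 + 1, x.2.1, x.2.2)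
def σ₁ : ℤ × ℕ × ℕ → ℤ × ℕ × ℕ := fun x => (x.1 + 1, x.2.1 + 1, x.2.2)
def σ₂ : ℤ × ℕ × ℕ → ℤ × ℕ × ℕ := fun x => (x.1 + 1, x.2.1 + 1, x.2.2 + 1)
def σY : ℤ × ℕ × ℕ → ℤ × ℕ × ℕ := fun x => (x.1 + 1, x.2.1, x.2.2 + 1)

lemma σ₀_inj : Function.Injective σ₀ := by
  rintro ⟨m, i, j⟩ ⟨m', i', j'⟩ h
  simp only [σ₀, Prod.mk.injEq] at h
  obtain ⟨h1, h2, h3⟩ := h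
  simp_all
lemma σ₁_inj : Function.Injective σ₁ := by
  rintro ⟨m, i, j⟩ ⟨m', i', j'⟩ h
  simp only [σ₁, Prod.mk.injEq] at h
  obtain ⟨h1, h2, h3⟩ := h
  simp_all
lemma σ₂_inj : Function.Injective σ₂ := by
  rintro ⟨m, i, j⟩ ⟨m', i', j'⟩ h
  simp only [σ₂, Prod.mk.injEq] at h
  obtain ⟨h1, h2, h3⟩ := h
  simp_all
lemma σY_inj : Function.Injective σY := by
  rintro ⟨m, i, j⟩ ⟨m', i', j'⟩ h
  simp only [σY, Prod.mk.injEq] at h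
  obtain ⟨h1, h2, h3⟩ := h
  simp_all

def c₀ (q : ℝ) (x : ℤ × ℕ × ℕ) : ℝ := q ^ (x.2.1 + x.2.2)
def c₁ (q : ℝ) (x : ℤ × ℕ × ℕ) : ℝ := Real.sqrt (1 - q ^ (2 * x.2.1 + 2)) * q ^ x.2.2
def c₂ (q : ℝ) (x : ℤ × ℕ × ℕ) : ℝ :=
  Real.sqrt ((1 - q ^ (2 * x.2.1 + 2)) * (1 - q ^ (2 * x.2.2 + 2)))
def cY (q : ℝ) (x : ℤ × ℕ × ℕ) : ℝ := q ^ x.2.1 * Real.sqrt (1 - q ^ (2 * x.2.2 + 2))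

lemma isX₀_pt {q : ℝ} {T : H →L[ℂ] H} (h : IsX₀ q T) (x : ℤ × ℕ × ℕ) :
    T (e x) = ((c₀ q x : ℝ) : ℂ) • e (σ₀ x) := by
  obtain ⟨m, i, j⟩ := x; exact h m i j
lemma isX₁_pt {q : ℝ} {T : H →L[ℂ] H} (h : IsX₁ q T) (x : ℤ × ℕ × ℕ) :
    T (e x) = ((c₁ q x : ℝ) : ℂ) • e (σ₁ x) := by
  obtain ⟨m, i, j⟩ := x; exact h m i j
lemma isX₂_pt {q : ℝ} {T : H →L[ℂ] H} (h : IsX₂ q T) (x : ℤ × ℕ × ℕ) :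
    T (e x) = ((c₂ q x : ℝ) : ℂ) • e (σ₂ x) := by
  obtain ⟨m, i, j⟩ := x; exact h m i j
lemma isY₁_pt {q : ℝ} {T : H →L[ℂ] H} (h : IsY₁ q T) (x : ℤ × ℕ × ℕ) :
    T (e x) = ((cY q x : ℝ) : ℂ) • e (σY x) := by
  obtain ⟨m, i, j⟩ := x; exact h m i j

set_option maxHeartbeats 1000000 in
/-- For every `q ∈ (0,1)`, the undeformed algebra `D₃⁴(0)` is contained in `D₃⁴(q)`; that is,
each of `X₀(0), X₁(0), X₂(0), Y₁(0)` belongs to the unital C*-algebra generated by the deformed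
operators. -/
theorem stmt_8 (q : ℝ) (hq : q ∈ Set.Ioo (0 : ℝ) 1)
    (X₀q X₁q X₂q Y₁q X₀0 X₁0 X₂0 Y₁0 : H →L[ℂ] H)
    (h0q : IsX₀ q X₀q) (h1q : IsX₁ q X₁q) (h2q : IsX₂ q X₂q) (hYq : IsY₁ q Y₁q)
    (h00 : IsX₀ 0 X₀0) (h10 : IsX₁ 0 X₁0) (h20 : IsX₂ 0 X₂0) (hY0 : IsY₁ 0 Y₁0) :
    (X₀0 ∈ D34 X₀q X₁q X₂q Y₁q ∧ X₁0 ∈ D34 X₀q X₁q X₂q Y₁q ∧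
      X₂0 ∈ D34 X₀q X₁q X₂q Y₁q ∧ Y₁0 ∈ D34 X₀q X₁q X₂q Y₁q) ∧
      D34 X₀0 X₁0 X₂0 Y₁0 ≤ D34 X₀q X₁q X₂q Y₁q := by
  obtain ⟨hq0, hq1⟩ := hq
  set D := D34 X₀q X₁q X₂q Y₁q with hDdef
  have hDc : IsClosed (D : Set (H →L[ℂ] H)) :=
    StarSubalgebra.isClosed_topologicalClosure _
  have hgen : ∀ T ∈ ({X₀q, X₁q, X₂q, Y₁q} : Set (H →L[ℂ] H)), T ∈ D := fun T hT =>
    StarSubalgebra.le_topologicalClosure _ (StarAlgebra.subset_adjoin ℂ _ hT)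
  have h0 : X₀q ∈ D := hgen _ (Set.mem_insert _ _)
  have h1 : X₁q ∈ D := hgen _ (Set.mem_insert_of_mem _ (Set.mem_insert _ _))
  have h2 : X₂q ∈ D := hgen _ (Set.mem_insert_of_mem _ (Set.mem_insert_of_mem _ (Set.mem_insert _ _)))
  have hY : Y₁q ∈ D := hgen _ (Set.mem_insert_of_mem _ (Set.mem_insert_of_mem _ (Set.mem_insert_of_mem _ rfl)))
  have memlim : ∀ T : H →L[ℂ] H, (∀ ε > (0 : ℝ), ∃ T' ∈ D, ‖T' - T‖ ≤ ε) → T ∈ D := by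
    intro T h
    have : T ∈ closure (D : Set (H →L[ℂ] H)) := by
      refine Metric.mem_closure_iff.mpr fun ε hε => ?_
      obtain ⟨T', hT', hn⟩ := h (ε / 2) (by positivity)
      exact ⟨T', hT', by
        rw [dist_eq_norm, norm_sub_rev]
        calc ‖T' - T‖ ≤ ε / 2 := hn
        _ < ε := by linarith⟩
    rwa [hDc.closure_eq] at this
  -- pointwise forms
  have p0 := isX₀_pt h0q
  have p1 := isX₁_pt h1q
  have p2 := isX₂_pt h2q
  have pY := isY₁_pt hYq
  have p00 := isX₀_pt h00
  have p10 := isX₁_pt h10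
  have p20 := isX₂_pt h20
  have pY0 := isY₁_pt hY0
  -- basic real facts
  have hpow_le_one : ∀ k : ℕ, q ^ k ≤ 1 := fun k => pow_le_one₀ hq0.le hq1.le
  have hpow_lt_one : ∀ k : ℕ, k ≠ 0 → q ^ k < 1 := fun k hk => pow_lt_one₀ hq0.le hq1 hk
  set g : ℕ → ℝ := fun k => Real.sqrt (1 - q ^ (2 * k + 2)) with hgdef
  have hg_pos : ∀ k, 0 < g k := fun k =>
    Real.sqrt_pos.mpr (by have := hpow_lt_one (2 * k + 2) (by omega); linarith)
  have hg_le_one : ∀ k, g k ≤ 1 := by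
    intro k
    have h1 : (0:ℝ) ≤ q ^ (2 * k + 2) := by positivity
    exact Real.sqrt_le_one.mpr (by linarith)
  set M : ℝ := (Real.sqrt (1 - q ^ 2))⁻¹ with hMdef
  have hM_pos : 0 < M := by
    have := hpow_lt_one 2 (by omega)
    exact inv_pos.mpr (Real.sqrt_pos.mpr (by linarith))
  have hginv_le_M : ∀ k, (g k)⁻¹ ≤ M := by
    intro k
    have h1 : q ^ (2 * k + 2) ≤ q ^ 2 :=
      pow_le_pow_of_le_one hq0.le hq1.le (by omega)
    have h2 : Real.sqrt (1 - q ^ 2) ≤ g k := Real.sqrt_le_sqrt (by linarith)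
    exact inv_anti₀ (Real.sqrt_pos.mpr (by have := hpow_lt_one 2 (by omega); linarith)) h2
  have hpow_small : ∀ r > (0 : ℝ), ∃ n : ℕ, q ^ (2 * n + 1) ≤ r := by
    intro r hr
    obtain ⟨n, hn⟩ := exists_pow_lt_of_lt_one hr hq1
    exact ⟨n, le_trans (pow_le_pow_of_le_one hq0.le hq1.le (by omega)) hn.le⟩
  -- Weierstrass approximation of t ↦ (√(1 - q²t))⁻¹ on [0,1]
  have happrox : ∀ δ > (0 : ℝ), ∃ p : Polynomial ℝ,
      ∀ k : ℕ, |g k * p.eval (q ^ (2 * k)) - 1| ≤ δ ∧ |p.eval (q ^ (2 * k))| ≤ M + δ := by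
    intro δ hδ
    have hq2 : q ^ 2 < 1 := hpow_lt_one 2 (by omega)
    have hcont : ContinuousOn (fun t : ℝ => (Real.sqrt (1 - q ^ 2 * t))⁻¹) (Set.Icc 0 1) := by
      apply ContinuousOn.inv₀
      · exact (Real.continuous_sqrt.comp (continuous_const.sub (continuous_const.mul continuous_id))).continuousOn
      · intro t ht
        have ht1 := ht.2
        have : q ^ 2 * t ≤ q ^ 2 := by nlinarith [ht.1]
        exact ne_of_gt (Real.sqrt_pos.mpr (by nlinarith))
    obtain ⟨p, hp⟩ := exists_polynomial_near_of_continuousOn 0 1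
      (fun t => (Real.sqrt (1 - q ^ 2 * t))⁻¹) hcont δ hδ
    refine ⟨p, fun k => ?_⟩
    have hmem : q ^ (2 * k) ∈ Set.Icc (0 : ℝ) 1 := ⟨by positivity, hpow_le_one _⟩
    have hval : (Real.sqrt (1 - q ^ 2 * q ^ (2 * k)))⁻¹ = (g k)⁻¹ := by
      congr 2
      rw [← pow_add]
      ring_nf
    have hpk := hp (q ^ (2 * k)) hmem
    rw [hval] at hpk
    have hginv_pos := inv_pos.mpr (hg_pos k)
    constructor
    · have : g k * p.eval (q ^ (2 * k)) - 1 = g k * (p.eval (q ^ (2 * k)) - (g k)⁻¹) := by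
        rw [mul_sub, mul_inv_cancel₀ (hg_pos k).ne']
      rw [this, abs_mul, abs_of_pos (hg_pos k)]
      calc g k * |p.eval (q ^ (2 * k)) - (g k)⁻¹| ≤ 1 * δ := by
            apply mul_le_mul (hg_le_one k) hpk.le (abs_nonneg _) zero_le_one
      _ = δ := one_mul δ
    · calc |p.eval (q ^ (2 * k))| = |(g k)⁻¹ + (p.eval (q ^ (2 * k)) - (g k)⁻¹)| := by
            rw [add_sub_cancel]
      _ ≤ |(g k)⁻¹| + |p.eval (q ^ (2 * k)) - (g k)⁻¹| := abs_add_le _ _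
      _ ≤ M + δ := add_le_add (by rw [abs_of_pos hginv_pos]; exact hginv_le_M k) hpk.le
  -- the diagonal operators
  set A : H →L[ℂ] H := star X₀q * X₀q with hAdef
  have hAmem : A ∈ D := mul_mem (star_mem h0) h0
  have hApt : ∀ x, A (e x) = ((q ^ (2 * (x.2.1 + x.2.2)) : ℝ) : ℂ) • e x := by
    intro x
    rw [hAdef, ContinuousLinearMap.mul_apply, p0, map_smul,
      star_apply_shift X₀q σ₀ σ₀_inj (c₀ q) p0, smul_smul, ← Complex.ofReal_mul]
    congr 2
    show c₀ q x * c₀ q x = _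
    rw [c₀, ← pow_add]
    congr 1
    ring
  set Ai : H →L[ℂ] H := star Y₁q * Y₁q + ((q : ℂ) ^ 2) • A with hAidef
  have hAimem : Ai ∈ D := by
    refine add_mem (mul_mem (star_mem hY) hY) (D.smul_mem hAmem _)
  have hAipt : ∀ x, Ai (e x) = ((q ^ (2 * x.2.1) : ℝ) : ℂ) • e x := by
    intro x
    rw [hAidef, ContinuousLinearMap.add_apply, ContinuousLinearMap.mul_apply, pY, map_smul,
      star_apply_shift Y₁q σY σY_inj (cY q) pY, ContinuousLinearMap.smul_apply, hApt,
      smul_smul, smul_smul, ← add_smul]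
    congr 1
    have hnn : (0:ℝ) ≤ 1 - q ^ (2 * x.2.2 + 2) := by
      have := hpow_le_one (2 * x.2.2 + 2); linarith
    have hs := Real.mul_self_sqrt hnn
    have hreal : cY q x * cY q x + q ^ 2 * q ^ (2 * (x.2.1 + x.2.2)) = q ^ (2 * x.2.1) := by
      rw [cY]
      linear_combination (q ^ x.2.1 * q ^ x.2.1) * hs
    exact_mod_cast hreal
  set Aj : H →L[ℂ] H := star X₁q * X₁q + ((q : ℂ) ^ 2) • A with hAjdef
  have hAjmem : Aj ∈ D := by
    refine add_mem (mul_mem (star_mem h1) h1) (D.smul_mem hAmem _)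
  have hAjpt : ∀ x, Aj (e x) = ((q ^ (2 * x.2.2) : ℝ) : ℂ) • e x := by
    intro x
    rw [hAjdef, ContinuousLinearMap.add_apply, ContinuousLinearMap.mul_apply, p1, map_smul,
      star_apply_shift X₁q σ₁ σ₁_inj (c₁ q) p1, ContinuousLinearMap.smul_apply, hApt,
      smul_smul, smul_smul, ← add_smul]
    congr 1
    have hnn : (0:ℝ) ≤ 1 - q ^ (2 * x.2.1 + 2) := by
      have := hpow_le_one (2 * x.2.1 + 2); linarith
    have hs := Real.mul_self_sqrt hnn
    have hreal : c₁ q x * c₁ q x + q ^ 2 * q ^ (2 * (x.2.1 + x.2.2)) = q ^ (2 * x.2.2) := by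
      rw [c₁]
      linear_combination (q ^ x.2.2 * q ^ x.2.2) * hs
    exact_mod_cast hreal
  -- polynomial functional calculus membership
  have hpolymem : ∀ (B : H →L[ℂ] H), B ∈ D → ∀ p : Polynomial ℝ,
      Polynomial.aeval B (p.map (algebraMap ℝ ℂ)) ∈ D := by
    intro B hB p
    have hle : Algebra.adjoin ℂ {B} ≤ D.toSubalgebra :=
      Algebra.adjoin_le (Set.singleton_subset_iff.mpr hB)
    exact hle (Polynomial.aeval_mem_adjoin_singleton ℂ B)
  -- tail bound
  have tail_bound : ∀ (n k : ℕ), 1 ≤ k → (q ^ (2 * k)) ^ n * q ^ k ≤ q ^ (2 * n + 1) := by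
    intro n k hk
    rw [← pow_mul, ← pow_add]
    exact pow_le_pow_of_le_one hq0.le hq1.le (by nlinarith)
  -- ### membership of X₀0
  have m0 : X₀0 ∈ D := by
    apply memlim
    intro ε hε
    obtain ⟨n, hn⟩ := hpow_small ε hε
    refine ⟨X₀q * A ^ n, mul_mem h0 (pow_mem hAmem n), ?_⟩
    have hdiff : ∀ x, (X₀q * A ^ n - X₀0) (e x)
        = (((q ^ (2 * (x.2.1 + x.2.2))) ^ n * c₀ q x - c₀ 0 x : ℝ) : ℂ) • e (σ₀ x) := by
      intro x
      rw [ContinuousLinearMap.sub_apply, ContinuousLinearMap.mul_apply,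
        diag_pow A _ hApt, map_smul, p0, p00, smul_smul]
      push_cast
      rw [sub_smul]
    refine opNorm_le_of_shift _ σ₀ σ₀_inj _ ε hε.le hdiff fun x => ?_
    obtain ⟨m, i, j⟩ := x
    show |(q ^ (2 * (i + j))) ^ n * q ^ (i + j) - (0:ℝ) ^ (i + j)| ≤ ε
    rcases Nat.eq_zero_or_pos (i + j) with h | h
    · rw [h]; simpa using hε.le
    · rw [zero_pow (by omega), sub_zero, abs_of_nonneg (by positivity)]
      exact le_trans (tail_bound n (i + j) h) hn
  -- ### membership of X₂0
  have m2 : X₂0 ∈ D := by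
    apply memlim
    intro ε hε
    set δ : ℝ := min 1 (ε / 3) with hδdef
    have hδpos : 0 < δ := lt_min one_pos (by positivity)
    have hδ1 : δ ≤ 1 := min_le_left _ _
    have hδε : 3 * δ ≤ ε := by
      have := min_le_right (1:ℝ) (ε / 3); nlinarith [this]
    obtain ⟨p, hp⟩ := happrox δ hδpos
    set Pi := Polynomial.aeval Ai (p.map (algebraMap ℝ ℂ)) with hPidef
    set Pj := Polynomial.aeval Aj (p.map (algebraMap ℝ ℂ)) with hPjdef
    refine ⟨X₂q * Pi * Pj, mul_mem (mul_mem h2 (hpolymem Ai hAimem p)) (hpolymem Aj hAjmem p), ?_⟩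
    have hdiff : ∀ x, (X₂q * Pi * Pj - X₂0) (e x)
        = ((p.eval (q ^ (2 * x.2.2)) * p.eval (q ^ (2 * x.2.1)) * c₂ q x - c₂ 0 x : ℝ) : ℂ)
          • e (σ₂ x) := by
      intro x
      rw [ContinuousLinearMap.sub_apply, ContinuousLinearMap.mul_apply,
        ContinuousLinearMap.mul_apply, diag_poly Aj _ hAjpt, map_smul, diag_poly Ai _ hAipt,
        map_smul, map_smul, p2, p20, smul_smul, smul_smul]
      push_cast
      rw [sub_smul]
    refine opNorm_le_of_shift _ σ₂ σ₂_inj _ ε hε.le hdiff fun x => ?_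
    obtain ⟨m, i, j⟩ := x
    have hc2 : c₂ q (m, i, j) = g i * g j := by
      rw [c₂]
      exact Real.sqrt_mul (by have := hpow_le_one (2 * i + 2); linarith) _
    have hc20 : c₂ 0 (m, i, j) = 1 := by
      rw [c₂]
      norm_num [zero_pow]
    rw [hc2, hc20]
    obtain ⟨hpi1, hpi2⟩ := hp i
    obtain ⟨hpj1, hpj2⟩ := hp j
    set u := p.eval (q ^ (2 * i))
    set v := p.eval (q ^ (2 * j))
    have key : |v * u * (g i * g j) - 1| ≤ 3 * δ := by
      have e1 : v * u * (g i * g j) - 1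
          = (g i * u - 1) * (g j * v - 1) + (g i * u - 1) + (g j * v - 1) := by ring
      rw [e1]
      calc |(g i * u - 1) * (g j * v - 1) + (g i * u - 1) + (g j * v - 1)|
          ≤ |(g i * u - 1) * (g j * v - 1)| + |g i * u - 1| + |g j * v - 1| := by
            exact le_trans (abs_add_le _ _) (add_le_add_left (abs_add_le _ _) _)
      _ = |g i * u - 1| * |g j * v - 1| + |g i * u - 1| + |g j * v - 1| := by rw [abs_mul]
      _ ≤ δ * 1 + δ + δ := by
            refine add_le_add (add_le_add ?_ hpi1) hpj1
            exact mul_le_mul hpi1 (le_trans hpj1 hδ1) (abs_nonneg _) hδpos.le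
      _ = 3 * δ := by ring
    exact le_trans key hδε
  -- ### membership of X₁0
  have m1 : X₁0 ∈ D := by
    apply memlim
    intro ε hε
    set δ : ℝ := min 1 ε with hδdef
    have hδpos : 0 < δ := lt_min one_pos hε
    have hδ1 : δ ≤ 1 := min_le_left _ _
    have hδε : δ ≤ ε := min_le_right _ _
    obtain ⟨p, hp⟩ := happrox δ hδpos
    obtain ⟨n, hn⟩ := hpow_small (ε / (M + 1)) (by positivity)
    set Pi := Polynomial.aeval Ai (p.map (algebraMap ℝ ℂ)) with hPidef
    refine ⟨X₁q * Pi * Aj ^ n,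
      mul_mem (mul_mem h1 (hpolymem Ai hAimem p)) (pow_mem hAjmem n), ?_⟩
    have hdiff : ∀ x, (X₁q * Pi * Aj ^ n - X₁0) (e x)
        = (((q ^ (2 * x.2.2)) ^ n * p.eval (q ^ (2 * x.2.1)) * c₁ q x - c₁ 0 x : ℝ) : ℂ)
          • e (σ₁ x) := by
      intro x
      rw [ContinuousLinearMap.sub_apply, ContinuousLinearMap.mul_apply,
        ContinuousLinearMap.mul_apply, diag_pow Aj _ hAjpt, map_smul, diag_poly Ai _ hAipt,
        map_smul, map_smul, p1, p10, smul_smul, smul_smul]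
      push_cast
      rw [sub_smul]
    refine opNorm_le_of_shift _ σ₁ σ₁_inj _ ε hε.le hdiff fun x => ?_
    obtain ⟨m, i, j⟩ := x
    obtain ⟨hpi1, hpi2⟩ := hp i
    set u := p.eval (q ^ (2 * i))
    have hc1 : c₁ q (m, i, j) = g i * q ^ j := rfl
    have hc10 : c₁ 0 (m, i, j) = (0:ℝ) ^ j := by
      rw [c₁]
      norm_num [zero_pow]
    rw [hc1, hc10]
    rcases Nat.eq_zero_or_pos j with h | h
    · subst h
      simp only [mul_zero, pow_zero, one_pow, one_mul, mul_one]
      calc |u * g i - 1| = |g i * u - 1| := by rw [mul_comm u]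
      _ ≤ δ := hpi1
      _ ≤ ε := hδε
    · rw [zero_pow (by omega), sub_zero]
      have habs : |(q ^ (2 * j)) ^ n * u * (g i * q ^ j)|
          = (q ^ (2 * j)) ^ n * q ^ j * (|u| * g i) := by
        rw [abs_mul, abs_mul, abs_mul, abs_of_nonneg (by positivity : (0:ℝ) ≤ (q ^ (2*j))^n),
          abs_of_nonneg (by positivity : (0:ℝ) ≤ q ^ j), abs_of_pos (hg_pos i)]
        ring
      rw [habs]
      have h1 : (q ^ (2 * j)) ^ n * q ^ j ≤ q ^ (2 * n + 1) := tail_bound n j h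
      have h2 : |u| * g i ≤ M + 1 := by
        calc |u| * g i ≤ (M + δ) * 1 :=
          mul_le_mul hpi2 (hg_le_one i) (hg_pos i).le (by linarith [hM_pos])
        _ ≤ M + 1 := by linarith
      calc (q ^ (2 * j)) ^ n * q ^ j * (|u| * g i) ≤ q ^ (2 * n + 1) * (M + 1) := by
            apply mul_le_mul h1 h2 (by positivity) (by positivity)
      _ ≤ ε / (M + 1) * (M + 1) := by
            apply mul_le_mul_of_nonneg_right hn (by linarith [hM_pos])
      _ = ε := by field_simp
  -- ### membership of Y₁0
  have mY : Y₁0 ∈ D := by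
    apply memlim
    intro ε hε
    set δ : ℝ := min 1 ε with hδdef
    have hδpos : 0 < δ := lt_min one_pos hε
    have hδ1 : δ ≤ 1 := min_le_left _ _
    have hδε : δ ≤ ε := min_le_right _ _
    obtain ⟨p, hp⟩ := happrox δ hδpos
    obtain ⟨n, hn⟩ := hpow_small (ε / (M + 1)) (by positivity)
    set Pj := Polynomial.aeval Aj (p.map (algebraMap ℝ ℂ)) with hPjdef
    refine ⟨Y₁q * Pj * Ai ^ n,
      mul_mem (mul_mem hY (hpolymem Aj hAjmem p)) (pow_mem hAimem n), ?_⟩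
    have hdiff : ∀ x, (Y₁q * Pj * Ai ^ n - Y₁0) (e x)
        = (((q ^ (2 * x.2.1)) ^ n * p.eval (q ^ (2 * x.2.2)) * cY q x - cY 0 x : ℝ) : ℂ)
          • e (σY x) := by
      intro x
      rw [ContinuousLinearMap.sub_apply, ContinuousLinearMap.mul_apply,
        ContinuousLinearMap.mul_apply, diag_pow Ai _ hAipt, map_smul, diag_poly Aj _ hAjpt,
        map_smul, map_smul, pY, pY0, smul_smul, smul_smul]
      push_cast
      rw [sub_smul]
    refine opNorm_le_of_shift _ σY σY_inj _ ε hε.le hdiff fun x => ?_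
    obtain ⟨m, i, j⟩ := x
    obtain ⟨hpj1, hpj2⟩ := hp j
    set v := p.eval (q ^ (2 * j))
    have hcY : cY q (m, i, j) = q ^ i * g j := rfl
    have hcY0 : cY 0 (m, i, j) = (0:ℝ) ^ i := by
      rw [cY]
      norm_num [zero_pow]
    rw [hcY, hcY0]
    rcases Nat.eq_zero_or_pos i with h | h
    · subst h
      simp only [mul_zero, pow_zero, one_pow, one_mul, mul_one]
      calc |v * g j - 1| = |g j * v - 1| := by rw [mul_comm v]
      _ ≤ δ := hpj1
      _ ≤ ε := hδε
    · rw [zero_pow (by omega), sub_zero]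
      have habs : |(q ^ (2 * i)) ^ n * v * (q ^ i * g j)|
          = (q ^ (2 * i)) ^ n * q ^ i * (|v| * g j) := by
        rw [abs_mul, abs_mul, abs_mul, abs_of_nonneg (by positivity : (0:ℝ) ≤ (q ^ (2*i))^n),
          abs_of_nonneg (by positivity : (0:ℝ) ≤ q ^ i), abs_of_pos (hg_pos j)]
        ring
      rw [habs]
      have h1 : (q ^ (2 * i)) ^ n * q ^ i ≤ q ^ (2 * n + 1) := tail_bound n i h
      have h2 : |v| * g j ≤ M + 1 := by
        calc |v| * g j ≤ (M + δ) * 1 :=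
          mul_le_mul hpj2 (hg_le_one j) (hg_pos j).le (by linarith [hM_pos])
        _ ≤ M + 1 := by linarith
      calc (q ^ (2 * i)) ^ n * q ^ i * (|v| * g j) ≤ q ^ (2 * n + 1) * (M + 1) := by
            apply mul_le_mul h1 h2 (by positivity) (by positivity)
      _ ≤ ε / (M + 1) * (M + 1) := by
            apply mul_le_mul_of_nonneg_right hn (by linarith [hM_pos])
      _ = ε := by field_simp
  refine ⟨⟨m0, m1, m2, mY⟩, ?_⟩
  refine StarSubalgebra.topologicalClosure_minimal ?_ hDc
  refine StarAlgebra.adjoin_le ?_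
  intro T hT
  simp only [Set.mem_insert_iff, Set.mem_singleton_iff] at hT
  rcases hT with rfl | rfl | rfl | rfl
  · exact m0
  · exact m1
  · exact m2
  · exact mY
end
end
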